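/- arXiv:2603.21400 — 6 statements merged into one kernel-verified Lean document; each statement's English description precedes it below -/
import Mathlib

section
/- Let d ∈ {2,3}. Under Assumptions (A), (B), (C), there exist a strictly increasing sequence of integers (N_k)_{k∈ℕ} and a function p ∈ L²(ℝ^d, U(x)dx) such that for every bounded continuous function f : ℝ^d → ℂ one has (1/N_k)·Σ_{j=1}^{N_k} p_{N_k,j}·f(x_{N_k,j}) → ∫_{ℝ^d} f(x)·p(x)·U(x) dx as k → ∞. In other words, the complex measures ν_N = (1/N)·Σ_{j=1}^N p_{N,j}·δ_{x_{N,j}} admit a weakly convergent subsequence whose limit is absolutely continuous with respect to μ_∞ = U(x)dx, with density p ∈ L²(ℝ^d, U(x)dx). -/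
open MeasureTheory Filter Finset Real Topology

open scoped ENNReal NNReal ComplexConjugate

noncomputable section

private lemma aux_sqrt_le {a b r : ℝ} (ha : 0 ≤ a) (hb : 0 ≤ b) (hr : 0 ≤ r)
    (h : a ^ 2 ≤ r * b ^ 2) : a ≤ Real.sqrt r * b := by
  have h2 := Real.sqrt_le_sqrt h
  rwa [Real.sqrt_sq ha, Real.sqrt_mul hr, Real.sqrt_sq hb] at h2

set_option maxHeartbeats 2000000 in
/-- Under Assumptions (A), (B), (C), the complex measures
`ν_N = (1/N)·Σ_j p_{N,j}·δ_{x_{N,j}}` admit a weakly convergent subsequence whose limit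
is absolutely continuous w.r.t. `U(x)dx`, with density `q ∈ L²(ℝ^d, U(x)dx)`. -/
theorem stmt_0
    (d : ℕ) (hd : d = 2 ∨ d = 3)
    (U : EuclideanSpace ℝ (Fin d) → ℝ)
    (hU_nonneg : ∀ y, 0 ≤ U y)
    (hU_bdd : ∃ M : ℝ, ∀ y, U y ≤ M)
    (hU_supp : HasCompactSupport U)
    (hU_int : ∫ y, U y = 1)
    (x : (N : ℕ) → Fin N → EuclideanSpace ℝ (Fin d))
    (hx_supp : ∀ N (j : Fin N), x N j ∈ tsupport U)
    (hA : ∀ f : EuclideanSpace ℝ (Fin d) → ℂ, Continuous f → (∃ M, ∀ y, ‖f y‖ ≤ M) →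
      Tendsto (fun N : ℕ => (N : ℂ)⁻¹ * ∑ j : Fin N, f (x N j)) atTop
        (𝓝 (∫ y, f y * (U y : ℂ))))
    (ℓ : ℝ) (hℓ : 0 < ℓ)
    (hB : ∀ N : ℕ, ∀ i j : Fin N, i ≠ j →
      ℓ * (N : ℝ) ^ (-(1 : ℝ) / d) ≤ ‖x N i - x N j‖)
    (p : (N : ℕ) → Fin N → ℂ)
    (c : ℝ) (hc : 0 < c)
    (hC : ∀ N : ℕ, (N : ℝ)⁻¹ * ∑ j : Fin N, ‖p N j‖ ^ 2 ≤ c) :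
    ∃ Nk : ℕ → ℕ, StrictMono Nk ∧
      ∃ q : EuclideanSpace ℝ (Fin d) → ℂ,
        Integrable (fun y => ‖q y‖ ^ 2 * U y) ∧
        ∀ f : EuclideanSpace ℝ (Fin d) → ℂ, Continuous f → (∃ M, ∀ y, ‖f y‖ ≤ M) →
          Tendsto
            (fun k : ℕ => ((Nk k : ℂ))⁻¹ * ∑ j : Fin (Nk k), p (Nk k) j * f (x (Nk k) j))
            atTop (𝓝 (∫ y, f y * q y * (U y : ℂ))) := by
  classical
  clear hd hB hℓ hx_supp hU_supp hU_bdd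
  -- `U` is integrable (otherwise its integral would be `0`, not `1`).
  have hU_integrable : Integrable U := by
    by_contra h
    rw [integral_undef h] at hU_int
    norm_num at hU_int
  have hUmeas : AEMeasurable (fun y : EuclideanSpace ℝ (Fin d) => (U y).toNNReal) volume :=
    measurable_real_toNNReal.comp_aemeasurable hU_integrable.aemeasurable
  set ν : Measure (EuclideanSpace ℝ (Fin d)) := volume.withDensity (fun y => ((U y).toNNReal : ℝ≥0∞)) with hνdef
  haveI : IsFiniteMeasure ν := by
    refine isFiniteMeasure_withDensity ?_
    exact hU_integrable.lintegral_lt_top.ne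
  haveI : Fact ((1:ℝ≥0∞) ≤ 2) := ⟨one_le_two⟩
  haveI : Fact ((2:ℝ≥0∞) ≠ ∞) := ⟨ENNReal.ofNat_ne_top⟩
  haveI : TopologicalSpace.SeparableSpace (Lp ℂ 2 ν) := by infer_instance
  haveI : Nonempty (Lp ℂ 2 ν) := ⟨0⟩
  set J : (BoundedContinuousFunction (EuclideanSpace ℝ (Fin d)) ℂ) →L[ℂ] (Lp ℂ 2 ν) := BoundedContinuousFunction.toLp (E := ℂ) 2 ν ℂ with hJdef
  have hJdense : DenseRange J := BoundedContinuousFunction.toLp_denseRange _ _ ℂ (by norm_num)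
  -- The discrete pairings and their quadratic companions
  set Λ : ℕ → (BoundedContinuousFunction (EuclideanSpace ℝ (Fin d)) ℂ) → ℂ :=
    fun N f => (N : ℂ)⁻¹ * ∑ j : Fin N, p N j * f (x N j) with hΛdef
  set S : ℕ → (BoundedContinuousFunction (EuclideanSpace ℝ (Fin d)) ℂ) → ℝ :=
    fun N f => (N : ℝ)⁻¹ * ∑ j : Fin N, ‖f (x N j)‖ ^ 2 with hSdef
  set B : (BoundedContinuousFunction (EuclideanSpace ℝ (Fin d)) ℂ) → ℝ := fun f => ∫ y, ‖f y‖ ^ 2 * U y with hBdef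
  have hS_nonneg : ∀ N f, 0 ≤ S N f := by
    intro N f
    simp only [hSdef]
    positivity
  -- Cauchy-Schwarz bound
  have hE1 : ∀ N f, ‖Λ N f‖ ^ 2 ≤ c * S N f := by
    intro N f
    have h1 : ‖Λ N f‖ ≤ (N : ℝ)⁻¹ * ∑ j : Fin N, ‖p N j‖ * ‖f (x N j)‖ := by
      simp only [hΛdef]
      rw [norm_mul, norm_inv, Complex.norm_natCast]
      gcongr
      exact (norm_sum_le _ _).trans (le_of_eq (by simp [norm_mul]))
    have h2 : (∑ j : Fin N, ‖p N j‖ * ‖f (x N j)‖) ^ 2 ≤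
        (∑ j : Fin N, ‖p N j‖ ^ 2) * (∑ j : Fin N, ‖f (x N j)‖ ^ 2) :=
      Finset.sum_mul_sq_le_sq_mul_sq _ _ _
    calc ‖Λ N f‖ ^ 2
        ≤ ((N : ℝ)⁻¹ * ∑ j : Fin N, ‖p N j‖ * ‖f (x N j)‖) ^ 2 := by
          apply pow_le_pow_left₀ (norm_nonneg _) h1
      _ = ((N : ℝ)⁻¹)^2 * (∑ j : Fin N, ‖p N j‖ * ‖f (x N j)‖) ^ 2 := by ring
      _ ≤ ((N : ℝ)⁻¹)^2 * ((∑ j : Fin N, ‖p N j‖ ^ 2) * (∑ j : Fin N, ‖f (x N j)‖ ^ 2)) := by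
          apply mul_le_mul_of_nonneg_left h2 (by positivity)
      _ = ((N : ℝ)⁻¹ * ∑ j : Fin N, ‖p N j‖ ^ 2) * S N f := by
          simp only [hSdef]; ring
      _ ≤ c * S N f := mul_le_mul_of_nonneg_right (hC N) (hS_nonneg N f)
  have hSle : ∀ N f, S N f ≤ ‖f‖ ^ 2 := by
    intro N f
    rcases Nat.eq_zero_or_pos N with h | h
    · subst h
      have h0 : S 0 f = 0 := by simp [hSdef]
      rw [h0]
      positivity
    · simp only [hSdef]
      rw [inv_mul_le_iff₀ (by exact_mod_cast h)]
      calc ∑ j : Fin N, ‖f (x N j)‖ ^ 2 ≤ ∑ _j : Fin N, ‖f‖ ^ 2 := by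
            apply Finset.sum_le_sum
            intro j _
            exact pow_le_pow_left₀ (norm_nonneg _) (f.norm_coe_le_norm _) 2
        _ = (N : ℝ) * ‖f‖ ^ 2 := by
            rw [Finset.sum_const, Finset.card_univ, Fintype.card_fin, nsmul_eq_mul]
  have hΛle : ∀ N f, ‖Λ N f‖ ≤ Real.sqrt c * ‖f‖ := by
    intro N f
    refine aux_sqrt_le (norm_nonneg _) (norm_nonneg _) hc.le ?_
    exact (hE1 N f).trans (mul_le_mul_of_nonneg_left (hSle N f) hc.le)
  -- linearity of `Λ` in `f`
  have hΛ_add : ∀ N f g, Λ N (f + g) = Λ N f + Λ N g := by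
    intro N f g
    simp only [hΛdef, BoundedContinuousFunction.coe_add, Pi.add_apply, mul_add,
      Finset.sum_add_distrib]
  have hΛ_sub : ∀ N f g, Λ N (f - g) = Λ N f - Λ N g := by
    intro N f g
    simp only [hΛdef, BoundedContinuousFunction.coe_sub, Pi.sub_apply, mul_sub,
      Finset.sum_sub_distrib]
  have hΛ_smul : ∀ N (a : ℂ) f, Λ N (a • f) = a * Λ N f := by
    intro N a f
    simp only [hΛdef, BoundedContinuousFunction.coe_smul, Pi.smul_apply, smul_eq_mul,
      Finset.mul_sum]
    apply Finset.sum_congr rfl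
    intro j _
    ring
  -- `S N f → B f`
  have hS_tendsto : ∀ f : BoundedContinuousFunction (EuclideanSpace ℝ (Fin d)) ℂ, Tendsto (fun N => S N f) atTop (𝓝 (B f)) := by
    intro f
    have hcont : Continuous fun y : EuclideanSpace ℝ (Fin d) => ((‖f y‖ ^ 2 : ℝ) : ℂ) :=
      Complex.continuous_ofReal.comp ((f.continuous.norm).pow 2)
    have hbdd : ∃ M, ∀ y : EuclideanSpace ℝ (Fin d), ‖((‖f y‖ ^ 2 : ℝ) : ℂ)‖ ≤ M := by
      refine ⟨‖f‖ ^ 2, fun y => ?_⟩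
      have hnn : ‖((‖f y‖ ^ 2 : ℝ) : ℂ)‖ = ‖f y‖ ^ 2 := by
        rw [Complex.norm_real, Real.norm_eq_abs, abs_of_nonneg (by positivity)]
      rw [hnn]
      exact pow_le_pow_left₀ (norm_nonneg _) (f.norm_coe_le_norm _) 2
    have h := hA _ hcont hbdd
    have heq : (fun N : ℕ => (N : ℂ)⁻¹ * ∑ j : Fin N, ((‖f (x N j)‖ ^ 2 : ℝ) : ℂ)) =
        fun N : ℕ => ((S N f : ℝ) : ℂ) := by
      funext N
      simp only [hSdef]
      push_cast
      ring
    rw [heq] at h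
    have heq2 : (∫ y, ((‖f y‖ ^ 2 : ℝ) : ℂ) * (U y : ℂ)) = ((B f : ℝ) : ℂ) := by
      simp only [hBdef, ← Complex.ofReal_mul]
      exact integral_ofReal
    rw [heq2] at h
    have := (Complex.continuous_re.tendsto _).comp h
    simpa [Function.comp_def] using this
  -- `B f = ‖J f‖²`
  have hν_int : ∀ g : EuclideanSpace ℝ (Fin d) → ℝ, (∫ y, g y ∂ν) = ∫ y, (U y) * g y := by
    intro g
    rw [hνdef, integral_withDensity_eq_integral_smul₀ hUmeas]
    apply integral_congr_ae
    filter_upwards with y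
    rw [NNReal.smul_def, Real.coe_toNNReal _ (hU_nonneg y), smul_eq_mul]
  have hB_eq : ∀ f : BoundedContinuousFunction (EuclideanSpace ℝ (Fin d)) ℂ, B f = ‖J f‖ ^ 2 := by
    intro f
    have h1 : (inner ℂ (J f) (J f) : ℂ) = ((‖J f‖ ^ 2 : ℝ) : ℂ) := by
      rw [inner_self_eq_norm_sq_to_K]
      exact (Complex.ofReal_pow _ _).symm
    have h2 : (inner ℂ (J f) (J f) : ℂ) = ∫ y, (inner ℂ ((J f) y) ((J f) y) : ℂ) ∂ν :=
      MeasureTheory.L2.inner_def (J f) (J f)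
    have h3 : (∫ y, (inner ℂ ((J f) y) ((J f) y) : ℂ) ∂ν) = ∫ y, ((‖f y‖ ^ 2 : ℝ) : ℂ) ∂ν := by
      apply integral_congr_ae
      filter_upwards [BoundedContinuousFunction.coeFn_toLp (E := ℂ) 2 ν ℂ f] with y hy
      rw [hy, inner_self_eq_norm_sq_to_K]
      exact (Complex.ofReal_pow _ _).symm
    have h4 : (∫ y, ((‖f y‖ ^ 2 : ℝ) : ℂ) ∂ν) = ((∫ y, ‖f y‖ ^ 2 ∂ν : ℝ) : ℂ) :=
      integral_ofReal
    have h5 : (∫ y, ‖f y‖ ^ 2 ∂ν) = B f := by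
      rw [hν_int fun y => ‖f y‖ ^ 2]
      simp only [hBdef]
      apply integral_congr_ae
      filter_upwards with y
      ring
    have hchain : ((‖J f‖ ^ 2 : ℝ) : ℂ) = ((∫ y, ‖f y‖ ^ 2 ∂ν : ℝ) : ℂ) :=
      h1.symm.trans (h2.trans (h3.trans h4))
    have hval : ‖J f‖ ^ 2 = ∫ y, ‖f y‖ ^ 2 ∂ν := Complex.ofReal_injective hchain
    rw [← h5, hval]
  -- countable family approximating everything in the `L²(ν)` sense
  set gs : ℕ → Lp ℂ 2 ν := TopologicalSpace.denseSeq _ with hgsdef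
  have hgs := TopologicalSpace.denseRange_denseSeq (Lp ℂ 2 ν)
  have hGex : ∀ m : ℕ × ℕ, ∃ fm : BoundedContinuousFunction (EuclideanSpace ℝ (Fin d)) ℂ, dist (gs m.1) (J fm) < 1/(m.2+1) := by
    intro m
    exact Metric.denseRange_iff.mp hJdense (gs m.1) _ (by positivity)
  choose Gg hGg using hGex
  have happrox : ∀ (f : BoundedContinuousFunction (EuclideanSpace ℝ (Fin d)) ℂ) (ε : ℝ), 0 < ε → ∃ m : ℕ × ℕ, ‖J f - J (Gg m)‖ < ε := by
    intro f ε hε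
    obtain ⟨n, hn⟩ := Metric.denseRange_iff.mp hgs (J f) (ε/2) (half_pos hε)
    obtain ⟨k, hk⟩ := exists_nat_one_div_lt (half_pos hε)
    refine ⟨(n, k), ?_⟩
    rw [← dist_eq_norm]
    calc dist (J f) (J (Gg (n, k)))
        ≤ dist (J f) (gs n) + dist (gs n) (J (Gg (n, k))) := dist_triangle _ _ _
      _ < ε/2 + 1/(k+1) := add_lt_add hn (hGg (n, k))
      _ ≤ ε/2 + ε/2 := by
          have : (1 : ℝ)/(k+1) ≤ ε/2 := le_of_lt (by exact_mod_cast hk)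
          linarith
      _ = ε := by ring
  -- extraction of a subsequence along which `Λ N (Gg m)` converges for every `m`
  set Φ : ℕ → (ℕ × ℕ → ℂ) := fun N m => Λ N (Gg m) with hΦdef
  have hmem : ∀ N, Φ N ∈ Set.pi Set.univ
      (fun m : ℕ × ℕ => Metric.closedBall (0:ℂ) (Real.sqrt c * ‖Gg m‖)) := by
    intro N m _
    simpa [Metric.mem_closedBall, dist_zero_right] using hΛle N (Gg m)
  obtain ⟨v, -, φ, hφ, hΦtendsto⟩ :=
    (isCompact_univ_pi fun m : ℕ × ℕ =>
      isCompact_closedBall (0:ℂ) (Real.sqrt c * ‖Gg m‖)).tendsto_subseq hmem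
  have hφtop : Tendsto φ atTop atTop := hφ.tendsto_atTop
  have hGconv : ∀ m : ℕ × ℕ, Tendsto (fun k => Λ (φ k) (Gg m)) atTop (𝓝 (v m)) := by
    intro m
    exact tendsto_pi_nhds.mp hΦtendsto m
  -- convergence of `Λ (φ k) f` for an arbitrary `f`
  have hLex : ∀ f : BoundedContinuousFunction (EuclideanSpace ℝ (Fin d)) ℂ, ∃ l, Tendsto (fun k => Λ (φ k) f) atTop (𝓝 l) := by
    intro f
    apply cauchySeq_tendsto_of_complete
    rw [Metric.cauchySeq_iff]
    intro ε hε
    set δ := ε / (4 * (Real.sqrt c + 1)) with hδdef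
    have hδpos : 0 < δ := by
      have : (0:ℝ) < Real.sqrt c + 1 := by positivity
      positivity
    have hsc : Real.sqrt c * δ < ε / 4 := by
      have hd1 : Real.sqrt c * δ = (Real.sqrt c / (Real.sqrt c + 1)) * (ε / 4) := by
        rw [hδdef]
        have hne : Real.sqrt c + 1 ≠ 0 := by positivity
        field_simp
      have hd2 : Real.sqrt c / (Real.sqrt c + 1) < 1 := by
        rw [div_lt_one (by positivity)]
        linarith
      calc Real.sqrt c * δ = (Real.sqrt c / (Real.sqrt c + 1)) * (ε / 4) := hd1
        _ < 1 * (ε / 4) := by apply mul_lt_mul_of_pos_right hd2 (by positivity)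
        _ = ε / 4 := one_mul _
    obtain ⟨m, hm⟩ := happrox f δ hδpos
    have hBsmall : B (f - Gg m) < δ ^ 2 := by
      rw [hB_eq, map_sub]
      exact pow_lt_pow_left₀ hm (norm_nonneg _) (by norm_num)
    have hev : ∀ᶠ N in atTop, ‖Λ N (f - Gg m)‖ ≤ Real.sqrt c * δ := by
      filter_upwards [(hS_tendsto (f - Gg m)).eventually_le_const hBsmall] with N hN
      refine aux_sqrt_le (norm_nonneg _) hδpos.le hc.le ?_
      exact (hE1 N _).trans (mul_le_mul_of_nonneg_left hN hc.le)
    have hev' : ∀ᶠ k in atTop, ‖Λ (φ k) (f - Gg m)‖ ≤ Real.sqrt c * δ := hφtop.eventually hev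
    obtain ⟨K₁, hK₁⟩ := eventually_atTop.mp hev'
    obtain ⟨K₂, hK₂⟩ := Metric.cauchySeq_iff.mp (hGconv m).cauchySeq (ε/4) (by positivity)
    refine ⟨max K₁ K₂, fun k hk j hj => ?_⟩
    have hk1 := hK₁ k (le_trans (le_max_left _ _) hk)
    have hj1 := hK₁ j (le_trans (le_max_left _ _) hj)
    have h2 := hK₂ k (le_trans (le_max_right _ _) hk) j (le_trans (le_max_right _ _) hj)
    have e1 : dist (Λ (φ k) f) (Λ (φ k) (Gg m)) ≤ Real.sqrt c * δ := by
      rw [dist_eq_norm, ← hΛ_sub]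
      exact hk1
    have e3 : dist (Λ (φ j) (Gg m)) (Λ (φ j) f) ≤ Real.sqrt c * δ := by
      rw [dist_comm, dist_eq_norm, ← hΛ_sub]
      exact hj1
    calc dist (Λ (φ k) f) (Λ (φ j) f)
        ≤ dist (Λ (φ k) f) (Λ (φ k) (Gg m)) + dist (Λ (φ k) (Gg m)) (Λ (φ j) (Gg m)) +
            dist (Λ (φ j) (Gg m)) (Λ (φ j) f) := dist_triangle4 _ _ _ _
      _ ≤ Real.sqrt c * δ + ε/4 + Real.sqrt c * δ := by
          apply add_le_add (add_le_add e1 h2.le) e3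
      _ < ε/4 + ε/4 + ε/4 := by linarith
      _ < ε := by linarith
  choose L hL using hLex
  -- properties of the limit functional
  have hLadd : ∀ f g, L (f + g) = L f + L g := by
    intro f g
    refine tendsto_nhds_unique (hL (f + g)) ?_
    have := (hL f).add (hL g)
    simpa [hΛ_add] using this
  have hLsub : ∀ f g, L (f - g) = L f - L g := by
    intro f g
    refine tendsto_nhds_unique (hL (f - g)) ?_
    have := (hL f).sub (hL g)
    simpa [hΛ_sub] using this
  have hLsmul : ∀ (a : ℂ) f, L (a • f) = a * L f := by
    intro a f
    refine tendsto_nhds_unique (hL (a • f)) ?_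
    have := (hL f).const_mul a
    simpa [hΛ_smul] using this
  have hLbound : ∀ f, ‖L f‖ ≤ Real.sqrt c * ‖J f‖ := by
    intro f
    have key : ∀ ε : ℝ, 0 < ε → ‖L f‖ ^ 2 ≤ c * (B f + ε) := by
      intro ε hε
      have hev : ∀ᶠ N in atTop, ‖Λ N f‖ ^ 2 ≤ c * (B f + ε) := by
        filter_upwards [(hS_tendsto f).eventually_le_const
          (lt_add_of_pos_right (B f) hε)] with N hN
        exact (hE1 N f).trans (mul_le_mul_of_nonneg_left hN hc.le)
      have hev' : ∀ᶠ k in atTop, ‖Λ (φ k) f‖ ^ 2 ≤ c * (B f + ε) := hφtop.eventually hev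
      exact le_of_tendsto (((hL f).norm).pow 2) hev'
    have h2 : ‖L f‖ ^ 2 ≤ c * B f := by
      refine le_of_forall_pos_le_add fun ε hε => ?_
      have := key (ε / c) (div_pos hε hc)
      rwa [mul_add, mul_div_cancel₀ _ hc.ne'] at this
    rw [hB_eq] at h2
    exact aux_sqrt_le (norm_nonneg _) (norm_nonneg _) hc.le h2
  have hwd : ∀ f g, J f = J g → L f = L g := by
    intro f g h
    have h1 : ‖L f - L g‖ ≤ 0 := by
      rw [← hLsub]
      refine (hLbound _).trans ?_
      rw [map_sub, h, sub_self, norm_zero, mul_zero]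
    have := le_antisymm h1 (norm_nonneg _)
    rwa [norm_eq_zero, sub_eq_zero] at this
  -- the bounded functional on the range of `J`, extended by Hahn-Banach
  set Sm : Submodule ℂ (Lp ℂ 2 ν) := LinearMap.range (J : (BoundedContinuousFunction (EuclideanSpace ℝ (Fin d)) ℂ) →ₗ[ℂ] Lp ℂ 2 ν)
    with hSmdef
  have hmemS : ∀ s : Sm, ∃ fsrc : BoundedContinuousFunction (EuclideanSpace ℝ (Fin d)) ℂ, J fsrc = (s : Lp ℂ 2 ν) := by
    intro s
    obtain ⟨y, hy⟩ := s.2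
    exact ⟨y, hy⟩
  have hmemS' : ∀ f : BoundedContinuousFunction (EuclideanSpace ℝ (Fin d)) ℂ, J f ∈ Sm := fun f => ⟨f, rfl⟩
  set pick : Sm → (BoundedContinuousFunction (EuclideanSpace ℝ (Fin d)) ℂ) := fun s => (hmemS s).choose with hpickdef
  have hpick : ∀ s, J (pick s) = (s : Lp ℂ 2 ν) := fun s => (hmemS s).choose_spec
  set ψlin : Sm →ₗ[ℂ] ℂ :=
    { toFun := fun s => L (pick s)
      map_add' := by
        intro s t
        have h1 : J (pick (s + t)) = J (pick s + pick t) := by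
          rw [hpick, _root_.map_add J, hpick, hpick, Submodule.coe_add]
        show L (pick (s + t)) = L (pick s) + L (pick t)
        rw [hwd _ _ h1, hLadd]
      map_smul' := by
        intro a s
        have h1 : J (pick (a • s)) = J (a • pick s) := by
          rw [hpick, _root_.map_smul J, hpick, Submodule.coe_smul]
        show L (pick (a • s)) = a • L (pick s)
        rw [hwd _ _ h1, hLsmul, smul_eq_mul] } with hψlindef
  have hψbound : ∀ s : Sm, ‖ψlin s‖ ≤ Real.sqrt c * ‖s‖ := by
    intro s
    have h1 : ψlin s = L (pick s) := rfl
    rw [h1, ← Submodule.norm_coe (𝕜 := ℂ) s, ← hpick s]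
    exact hLbound (pick s)
  set ψ : Sm →L[ℂ] ℂ := LinearMap.mkContinuous ψlin (Real.sqrt c) hψbound with hψdef
  obtain ⟨Gf, hGf, -⟩ := exists_extension_norm_eq (𝕜 := ℂ) Sm ψ
  have hGJ : ∀ f : BoundedContinuousFunction (EuclideanSpace ℝ (Fin d)) ℂ, Gf (J f) = L f := by
    intro f
    have h1 := hGf ⟨J f, hmemS' f⟩
    have h2 : ψ ⟨J f, hmemS' f⟩ = L (pick ⟨J f, hmemS' f⟩) := rfl
    rw [h2] at h1
    have h3 : J (pick ⟨J f, hmemS' f⟩) = J f := hpick ⟨J f, hmemS' f⟩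
    calc Gf (J f) = L (pick ⟨J f, hmemS' f⟩) := h1
      _ = L f := hwd _ _ h3
  -- Riesz representation
  set q' : Lp ℂ 2 ν := (InnerProductSpace.toDual ℂ (Lp ℂ 2 ν)).symm Gf with hq'def
  have hq'inner : ∀ φh : Lp ℂ 2 ν, (inner ℂ q' φh : ℂ) = Gf φh := fun φh =>
    InnerProductSpace.toDual_symm_apply
  set q : EuclideanSpace ℝ (Fin d) → ℂ := fun y => (starRingEnd ℂ) (q' y) with hqdef
  have hkey : ∀ f : BoundedContinuousFunction (EuclideanSpace ℝ (Fin d)) ℂ, L f = ∫ y, f y * q y * (U y : ℂ) := by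
    intro f
    have h1 : L f = (inner ℂ q' (J f) : ℂ) := by rw [hq'inner, hGJ]
    have h2 : (inner ℂ q' (J f) : ℂ) = ∫ y, (inner ℂ (q' y) ((J f) y) : ℂ) ∂ν :=
      MeasureTheory.L2.inner_def q' (J f)
    have h3 : (∫ y, (inner ℂ (q' y) ((J f) y) : ℂ) ∂ν) =
        ∫ y, (starRingEnd ℂ) (q' y) * f y ∂ν := by
      apply integral_congr_ae
      filter_upwards [BoundedContinuousFunction.coeFn_toLp (E := ℂ) 2 ν ℂ f] with y hy
      rw [RCLike.inner_apply', hy]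
    have h4 : (∫ y, (starRingEnd ℂ) (q' y) * f y ∂ν) =
        ∫ y, ((U y).toNNReal : ℝ≥0) • ((starRingEnd ℂ) (q' y) * f y) :=
      integral_withDensity_eq_integral_smul₀ hUmeas _
    have h5 : ∀ y, ((U y).toNNReal : ℝ≥0) • ((starRingEnd ℂ) (q' y) * f y) =
        f y * q y * (U y : ℂ) := by
      intro y
      rw [NNReal.smul_def, Real.coe_toNNReal _ (hU_nonneg y), Complex.real_smul, hqdef]
      ring
    rw [h1, h2, h3, h4]
    exact integral_congr_ae (Eventually.of_forall h5)
  -- integrability of the density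
  have hq_int : Integrable (fun y => ‖q y‖ ^ 2 * U y) := by
    have h0 : MemLp (q' : EuclideanSpace ℝ (Fin d) → ℂ) 2 ν := Lp.memLp q'
    have h1 : Integrable (fun y => ‖q' y‖ ^ 2) ν := by
      have h := h0.integrable_norm_rpow two_ne_zero ENNReal.ofNat_ne_top
      have heq : (fun y : EuclideanSpace ℝ (Fin d) => ‖q' y‖ ^ (2:ℝ≥0∞).toReal) = fun y : EuclideanSpace ℝ (Fin d) => ‖q' y‖ ^ 2 := by
        funext y
        rw [ENNReal.toReal_ofNat]
        exact Real.rpow_two _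
      rwa [heq] at h
    have h2 : Integrable (fun y => ((U y).toNNReal : ℝ≥0) • ‖q' y‖ ^ 2) volume :=
      (integrable_withDensity_iff_integrable_smul₀ hUmeas).mp h1
    refine h2.congr (Eventually.of_forall fun y => ?_)
    simp only [hqdef]
    rw [NNReal.smul_def, Real.coe_toNNReal _ (hU_nonneg y), smul_eq_mul,
      RCLike.norm_conj]
    ring
  refine ⟨φ, hφ, q, hq_int, ?_⟩
  intro f hfc hfb
  obtain ⟨M, hM⟩ := hfb
  set fb : BoundedContinuousFunction (EuclideanSpace ℝ (Fin d)) ℂ := BoundedContinuousFunction.ofNormedAddCommGroup f hfc M hM with hfbdef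
  have hfb_eq : ∀ y, fb y = f y := fun _ => rfl
  have h := hL fb
  rw [hkey fb] at h
  have heq1 : (fun k => Λ (φ k) fb) =
      fun k : ℕ => ((φ k : ℂ))⁻¹ * ∑ j : Fin (φ k), p (φ k) j * f (x (φ k) j) := by
    funext k
    simp only [hΛdef, hfbdef, BoundedContinuousFunction.coe_ofNormedAddCommGroup]
  have heq2 : (∫ y, fb y * q y * (U y : ℂ)) = ∫ y, f y * q y * (U y : ℂ) := rfl
  rw [heq1, heq2] at h
  exact h
end
end

section
/- Let d ∈ {2,3}. Under Assumptions (A) and (C), suppose that for every bounded continuous f : ℝ^d → ℂ the limit L(f) := lim_{N→∞} (1/N)·Σ_{j=1}^N p_{N,j}·f(x_{N,j}) exists. Then for every bounded continuous f : ℝ^d → ℂ one has |L(f)|² ≤ c·∫_{ℝ^d} |f(x)|²·U(x) dx. -/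
open MeasureTheory Filter Finset Real Topology

noncomputable section
set_option maxHeartbeats 800000

/-- Under Assumptions (A) and (C), if for every bounded continuous
`f : ℝ^d → ℂ` the limit `L(f) = lim_N (1/N)·Σ_j p_{N,j}·f(x_{N,j})` exists, then
`|L(f)|² ≤ c·∫ |f|²·U`. -/
theorem stmt_1
    (d : ℕ) (hd : d = 2 ∨ d = 3)
    (U : EuclideanSpace ℝ (Fin d) → ℝ)
    (hU_nonneg : ∀ y, 0 ≤ U y)
    (hU_bdd : ∃ M : ℝ, ∀ y, U y ≤ M)
    (hU_supp : HasCompactSupport U)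
    (hU_int : ∫ y, U y = 1)
    (x : (N : ℕ) → Fin N → EuclideanSpace ℝ (Fin d))
    (hx_supp : ∀ N (j : Fin N), x N j ∈ tsupport U)
    (hA : ∀ f : EuclideanSpace ℝ (Fin d) → ℂ, Continuous f → (∃ M, ∀ y, ‖f y‖ ≤ M) →
      Tendsto (fun N : ℕ => (N : ℂ)⁻¹ * ∑ j : Fin N, f (x N j)) atTop
        (𝓝 (∫ y, f y * (U y : ℂ))))
    (p : (N : ℕ) → Fin N → ℂ)
    (c : ℝ) (hc : 0 < c)
    (hC : ∀ N : ℕ, (N : ℝ)⁻¹ * ∑ j : Fin N, ‖p N j‖ ^ 2 ≤ c)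
    (L : (EuclideanSpace ℝ (Fin d) → ℂ) → ℂ)
    (hL : ∀ f : EuclideanSpace ℝ (Fin d) → ℂ, Continuous f → (∃ M, ∀ y, ‖f y‖ ≤ M) →
      Tendsto (fun N : ℕ => (N : ℂ)⁻¹ * ∑ j : Fin N, p N j * f (x N j)) atTop (𝓝 (L f))) :
    ∀ f : EuclideanSpace ℝ (Fin d) → ℂ, Continuous f → (∃ M, ∀ y, ‖f y‖ ≤ M) →
      ‖L f‖ ^ 2 ≤ c * ∫ y, ‖f y‖ ^ 2 * U y := by

  intro f hf hfb
  obtain ⟨M, hM⟩ := hfb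
  have hM0 : 0 ≤ M := le_trans (norm_nonneg _) (hM 0)
  set g : EuclideanSpace ℝ (Fin d) → ℂ := fun y => ((‖f y‖ ^ 2 : ℝ) : ℂ) with hg
  have hg_cont : Continuous g := Complex.continuous_ofReal.comp ((hf.norm).pow 2)
  have hg_bdd : ∃ M', ∀ y, ‖g y‖ ≤ M' := by
    refine ⟨M ^ 2, fun y => ?_⟩
    simp only [hg, Complex.norm_real]
    rw [Real.norm_eq_abs, abs_of_nonneg (by positivity)]
    exact pow_le_pow_left₀ (norm_nonneg _) (hM y) 2
  have hB := hA g hg_cont hg_bdd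
  have h1 : ∀ N : ℕ, (N : ℂ)⁻¹ * ∑ j : Fin N, g (x N j)
      = (((N : ℝ)⁻¹ * ∑ j : Fin N, ‖f (x N j)‖ ^ 2 : ℝ) : ℂ) := by
    intro N; push_cast [hg]; ring
  have h2 : (∫ y, g y * (U y : ℂ)) = ((∫ y, ‖f y‖ ^ 2 * U y : ℝ) : ℂ) := by
    simp only [hg, ← Complex.ofReal_mul]
    exact integral_ofReal
  rw [funext h1, h2] at hB
  have hBr : Tendsto (fun N : ℕ => (N : ℝ)⁻¹ * ∑ j : Fin N, ‖f (x N j)‖ ^ 2) atTop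
      (𝓝 (∫ y, ‖f y‖ ^ 2 * U y)) := Filter.tendsto_ofReal_iff.mp hB
  have hAlim : Tendsto (fun N : ℕ => ‖(N : ℂ)⁻¹ * ∑ j : Fin N, p N j * f (x N j)‖ ^ 2)
      atTop (𝓝 (‖L f‖ ^ 2)) := ((hL f hf ⟨M, hM⟩).norm).pow 2
  refine le_of_tendsto_of_tendsto' hAlim (hBr.const_mul c) (fun N => ?_)
  -- per-N Cauchy-Schwarz
  have hnn : (0:ℝ) ≤ (N : ℝ)⁻¹ := by positivity
  have hsum_nn : (0:ℝ) ≤ ∑ j : Fin N, ‖f (x N j)‖ ^ 2 :=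
    Finset.sum_nonneg fun j _ => by positivity
  have hCS : ‖∑ j : Fin N, p N j * f (x N j)‖ ^ 2
      ≤ (∑ j : Fin N, ‖p N j‖ ^ 2) * (∑ j : Fin N, ‖f (x N j)‖ ^ 2) := by
    have h3 : ‖∑ j : Fin N, p N j * f (x N j)‖ ≤ ∑ j : Fin N, ‖p N j‖ * ‖f (x N j)‖ := by
      refine le_trans (norm_sum_le _ _) (le_of_eq ?_)
      exact Finset.sum_congr rfl fun j _ => norm_mul _ _
    calc ‖∑ j : Fin N, p N j * f (x N j)‖ ^ 2
        ≤ (∑ j : Fin N, ‖p N j‖ * ‖f (x N j)‖) ^ 2 := by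
          exact pow_le_pow_left₀ (norm_nonneg _) h3 2
      _ ≤ (∑ j : Fin N, ‖p N j‖ ^ 2) * (∑ j : Fin N, ‖f (x N j)‖ ^ 2) :=
          Finset.sum_mul_sq_le_sq_mul_sq Finset.univ _ _
  have hnorm : ‖(N : ℂ)⁻¹ * ∑ j : Fin N, p N j * f (x N j)‖
      = (N : ℝ)⁻¹ * ‖∑ j : Fin N, p N j * f (x N j)‖ := by
    rw [norm_mul, norm_inv, Complex.norm_natCast]
  rw [hnorm, mul_pow]
  calc ((N:ℝ)⁻¹) ^ 2 * ‖∑ j : Fin N, p N j * f (x N j)‖ ^ 2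
      ≤ ((N:ℝ)⁻¹) ^ 2 * ((∑ j : Fin N, ‖p N j‖ ^ 2) * (∑ j : Fin N, ‖f (x N j)‖ ^ 2)) :=
        mul_le_mul_of_nonneg_left hCS (by positivity)
    _ = ((N:ℝ)⁻¹ * ∑ j : Fin N, ‖p N j‖ ^ 2) * ((N:ℝ)⁻¹ * ∑ j : Fin N, ‖f (x N j)‖ ^ 2) := by
        ring
    _ ≤ c * ((N:ℝ)⁻¹ * ∑ j : Fin N, ‖f (x N j)‖ ^ 2) :=
        mul_le_mul_of_nonneg_right (hC N) (by positivity)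
end
end

section
/- Let d = 3 and fix β ∈ (0,1). Under Assumptions (A) and (B), there exist a constant C > 0 and N₀ ∈ ℕ such that for every N ≥ N₀ and every λ > 0, (1/N²)·Σ_{1≤i,j≤N, i≠j} ( e^{−λ|x_{N,i} − x_{N,j}|} / (4π·|x_{N,i} − x_{N,j}|) )² ≤ C·λ^{−β}. -/
open MeasureTheory Filter Finset Real Topology

open Metric

open scoped ENNReal NNReal

noncomputable section

lemma aux_exp {β t : ℝ} (hβ0 : 0 < β) (hβ1 : β ≤ 1) (ht : 0 < t) :
    Real.exp (-t) ≤ t ^ (-β) := by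
  rcases le_or_gt t 1 with h | h
  · calc Real.exp (-t) ≤ 1 := by rw [Real.exp_le_one_iff]; linarith
    _ = t ^ (0:ℝ) := (Real.rpow_zero t).symm
    _ ≤ t ^ (-β) := Real.rpow_le_rpow_of_exponent_ge ht h (by linarith)
  · have h1 : Real.exp (-t) ≤ t ^ (-(1:ℝ)) := by
      rw [Real.rpow_neg_one, Real.exp_neg]
      have h2 : t ≤ Real.exp t := by linarith [Real.add_one_le_exp t]
      exact inv_anti₀ (by linarith) h2
    exact h1.trans (Real.rpow_le_rpow_of_exponent_le h.le (by linarith))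

lemma aux_anti {a b s : ℝ} (ha : 0 < a) (hab : a ≤ b) (hs : 0 ≤ s) :
    b ^ (-s) ≤ a ^ (-s) := by
  rw [Real.rpow_neg (ha.trans_le hab).le, Real.rpow_neg ha.le]
  exact inv_anti₀ (Real.rpow_pos_of_pos ha s) (Real.rpow_le_rpow ha.le hab hs)

lemma aux_count {N : ℕ} (y : Fin N → EuclideanSpace ℝ (Fin 3)) (δ : ℝ) (hδ : 0 < δ)
    (hsep : ∀ i j : Fin N, i ≠ j → δ ≤ ‖y i - y j‖) (S : Finset (Fin N))
    (c : EuclideanSpace ℝ (Fin 3)) (ρ : ℝ) (hρ : 0 ≤ ρ)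
    (hS : ∀ j ∈ S, y j ∈ Metric.ball c ρ) :
    (S.card : ℝ) * (δ/2)^3 ≤ (ρ + δ/2)^3 := by
  set μ : Measure (EuclideanSpace ℝ (Fin 3)) := volume
  have hdisj : (↑S : Set (Fin N)).PairwiseDisjoint (fun j => Metric.ball (y j) (δ/2)) := by
    intro j _ k _ hjk
    apply Metric.ball_disjoint_ball
    rw [dist_eq_norm]
    have := hsep j k hjk
    linarith
  have hsum : μ (⋃ j ∈ S, Metric.ball (y j) (δ/2)) = ∑ j ∈ S, μ (Metric.ball (y j) (δ/2)) :=
    measure_biUnion_finset hdisj fun j _ => measurableSet_ball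
  have hvol : ∀ z : EuclideanSpace ℝ (Fin 3), ∀ r : ℝ, 0 ≤ r →
      μ (Metric.ball z r) = ENNReal.ofReal (r ^ 3) * μ (Metric.ball 0 1) := by
    intro z r hr
    rw [Measure.addHaar_ball μ z hr]
    congr 2
    simp [finrank_euclideanSpace_fin]
  have hsub : (⋃ j ∈ S, Metric.ball (y j) (δ/2)) ⊆ Metric.ball c (ρ + δ/2) := by
    intro z hz
    simp only [Set.mem_iUnion] at hz
    obtain ⟨j, hj, hzj⟩ := hz
    have h1 := hS j hj
    rw [Metric.mem_ball] at *
    calc dist z c ≤ dist z (y j) + dist (y j) c := dist_triangle _ _ _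
      _ < δ/2 + ρ := by linarith
      _ = ρ + δ/2 := by ring
  have key : (S.card : ℝ≥0∞) * ENNReal.ofReal ((δ/2)^3) * μ (Metric.ball 0 1)
      ≤ ENNReal.ofReal ((ρ + δ/2)^3) * μ (Metric.ball 0 1) := by
    calc (S.card : ℝ≥0∞) * ENNReal.ofReal ((δ/2)^3) * μ (Metric.ball 0 1)
        = ∑ j ∈ S, μ (Metric.ball (y j) (δ/2)) := by
          rw [Finset.sum_congr rfl fun j _ => hvol (y j) (δ/2) (by positivity)]
          rw [Finset.sum_const, nsmul_eq_mul, mul_assoc]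
      _ = μ (⋃ j ∈ S, Metric.ball (y j) (δ/2)) := hsum.symm
      _ ≤ μ (Metric.ball c (ρ + δ/2)) := measure_mono hsub
      _ = ENNReal.ofReal ((ρ + δ/2)^3) * μ (Metric.ball 0 1) := hvol c _ (by positivity)
  have hv0 : μ (Metric.ball (0 : EuclideanSpace ℝ (Fin 3)) 1) ≠ 0 :=
    (measure_ball_pos μ 0 one_pos).ne'
  have hvt : μ (Metric.ball (0 : EuclideanSpace ℝ (Fin 3)) 1) ≠ ⊤ :=
    measure_ball_lt_top.ne
  have key2 : (S.card : ℝ≥0∞) * ENNReal.ofReal ((δ/2)^3) ≤ ENNReal.ofReal ((ρ + δ/2)^3) :=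
    (ENNReal.mul_le_mul_iff_left hv0 hvt).1 key
  have := ENNReal.toReal_mono (by simp) key2
  rwa [ENNReal.toReal_mul, ENNReal.toReal_natCast, ENNReal.toReal_ofReal (by positivity),
    ENNReal.toReal_ofReal (by positivity)] at this

lemma aux_pack (β : ℝ) (hβ0 : 0 < β) (hβ1 : β < 1) {N : ℕ}
    (y : Fin N → EuclideanSpace ℝ (Fin 3))
    (δ D : ℝ) (hδ : 0 < δ) (hδD : δ ≤ D)
    (hsep : ∀ i j : Fin N, i ≠ j → δ ≤ ‖y i - y j‖) (i : Fin N)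
    (hfar : ∀ j, ‖y i - y j‖ ≤ D) :
    ∑ j ∈ Finset.univ.erase i, ‖y i - y j‖ ^ (-(2+β)) ≤
      512 * ((2:ℝ) ^ ((1:ℝ)-β) / ((2:ℝ) ^ ((1:ℝ)-β) - 1)) * D ^ ((1:ℝ)-β) * δ ^ (-(3:ℝ)) := by
  have hD : 0 < D := hδ.trans_le hδD
  set q : ℝ := (2:ℝ) ^ ((1:ℝ)-β) with hq
  have hq1 : 1 < q := by
    rw [hq]
    apply Real.one_lt_rpow_iff_of_pos two_pos |>.2
    exact Or.inl ⟨one_lt_two, by linarith⟩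
  set s : ℝ := 2 + β with hs
  have hs0 : (0:ℝ) ≤ s := by rw [hs]; linarith
  set r : Fin N → ℝ := fun j => ‖y i - y j‖ with hr
  set M : ℕ := Nat.log 2 ⌊D/δ⌋₊ with hM
  have hfloorD : 1 ≤ ⌊D/δ⌋₊ := by
    apply Nat.le_floor
    rw [Nat.cast_one, le_div_iff₀ hδ, one_mul]
    exact hδD
  have h2M : (2:ℝ)^M ≤ D/δ := by
    have hnat : ((2:ℕ)^M : ℝ) ≤ (⌊D/δ⌋₊ : ℝ) := by
      exact_mod_cast Nat.pow_log_le_self 2 (by omega)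
    have hfl : (⌊D/δ⌋₊ : ℝ) ≤ D/δ := Nat.floor_le (by positivity)
    push_cast at hnat
    linarith
  set T : Finset (Fin N) := Finset.univ.erase i with hT
  set S : ℕ → Finset (Fin N) :=
    fun m => T.filter (fun j => (2:ℝ)^m * δ ≤ r j ∧ r j < (2:ℝ)^(m+1) * δ) with hS
  have hrpos : ∀ j ∈ T, 0 < r j ∧ δ ≤ r j := by
    intro j hj
    have hij : i ≠ j := (Finset.mem_erase.1 hj).1.symm
    have := hsep i j hij
    exact ⟨hδ.trans_le this, this⟩
  -- subset of biUnion
  have hsub : T ⊆ (Finset.range (M+1)).biUnion S := by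
    intro j hj
    obtain ⟨hr0, hrδ⟩ := hrpos j hj
    have h1le : (1:ℝ) ≤ r j / δ := by rw [le_div_iff₀ hδ, one_mul]; exact hrδ
    set t : ℕ := ⌊r j / δ⌋₊ with htdef
    have ht1 : 1 ≤ t := Nat.le_floor (by exact_mod_cast h1le)
    set m : ℕ := Nat.log 2 t with hm
    have hlow : (2:ℝ)^m * δ ≤ r j := by
      rw [← le_div_iff₀ hδ]
      have hnat : ((2:ℕ)^m : ℝ) ≤ (t : ℝ) := by exact_mod_cast Nat.pow_log_le_self 2 (by omega)
      have hfl : (t : ℝ) ≤ r j / δ := Nat.floor_le (by positivity)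
      push_cast at hnat
      linarith
    have hhigh : r j < (2:ℝ)^(m+1) * δ := by
      rw [← div_lt_iff₀ hδ]
      calc r j / δ < (t : ℝ) + 1 := Nat.lt_floor_add_one _
        _ ≤ ((2^(m+1) : ℕ) : ℝ) := by
            have := Nat.lt_pow_succ_log_self (by norm_num : 1 < 2) t
            exact_mod_cast this
        _ = (2:ℝ)^(m+1) := by push_cast; ring
    have hmM : m ≤ M := by
      apply Nat.log_mono_right
      apply Nat.floor_le_floor
      gcongr
      exact hfar j
    exact Finset.mem_biUnion.2 ⟨m, Finset.mem_range.2 (by omega),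
      Finset.mem_filter.2 ⟨hj, hlow, hhigh⟩⟩
  -- disjointness
  have hdisj : (↑(Finset.range (M+1)) : Set ℕ).PairwiseDisjoint S := by
    have key : ∀ a b : ℕ, a < b → ∀ j, j ∈ S a → j ∈ S b → False := by
      intro a b hab j hja hjb
      obtain ⟨-, h1, h2⟩ := Finset.mem_filter.1 hja
      obtain ⟨-, h3, h4⟩ := Finset.mem_filter.1 hjb
      have hpow : (2:ℝ)^(a+1) ≤ (2:ℝ)^b := by
        apply pow_le_pow_right₀ one_le_two
        omega
      nlinarith [hδ]
    intro a _ b _ hab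
    show Disjoint (S a) (S b)
    rw [Finset.disjoint_left]
    intro j hja hjb
    rcases lt_or_gt_of_ne hab with h | h
    · exact key a b h j hja hjb
    · exact key b a h j hjb hja
  -- per-shell bound
  have hshell : ∀ m : ℕ, ∑ j ∈ S m, r j ^ (-s) ≤ 512 * q^m * δ ^ (-s) := by
    intro m
    have hb : ∀ j ∈ S m, r j ^ (-s) ≤ ((2:ℝ)^m * δ) ^ (-s) := by
      intro j hj
      obtain ⟨-, h1, -⟩ := Finset.mem_filter.1 hj
      exact aux_anti (by positivity) h1 hs0
    have hcard : ((S m).card : ℝ) ≤ 512 * 8^m := by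
      have h0 := aux_count y δ hδ hsep (S m) (y i) ((2:ℝ)^(m+1) * δ) (by positivity)
        (by
          intro j hj
          obtain ⟨-, -, h2⟩ := Finset.mem_filter.1 hj
          rw [Metric.mem_ball, dist_eq_norm, ← norm_neg]
          simpa [neg_sub] using h2)
      have h1 : ((2:ℝ)^(m+1) * δ + δ/2)^3 ≤ ((2:ℝ)^(m+2) * δ)^3 := by
        apply pow_le_pow_left₀ (by positivity)
        have h1le2 : (1:ℝ) ≤ (2:ℝ)^(m+1) := one_le_pow₀ one_le_two
        have hv : δ ≤ (2:ℝ)^(m+1) * δ := le_mul_of_one_le_left hδ.le h1le2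
        rw [show ((2:ℝ)^(m+2)) = 2 * 2^(m+1) by ring]
        linarith
      have h2 : ((2:ℝ)^(m+2) * δ)^3 = 512 * 8^m * (δ/2)^3 := by
        have e : ((2:ℝ)^(m+2))^3 = 64 * 8^m := by
          rw [show (64:ℝ) = 2^(6:ℕ) by norm_num, show (8:ℝ) = 2^(3:ℕ) by norm_num,
            ← pow_mul, ← pow_mul, ← pow_add]
          congr 1
          ring
        have e2 : ((2:ℝ)^(m+2) * δ)^3 = ((2:ℝ)^(m+2))^3 * δ^3 := by ring
        rw [e2, e]; ring
      have h3 : (0:ℝ) < (δ/2)^3 := by positivity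
      exact (mul_le_mul_iff_of_pos_right h3).1 (by linarith)
    calc ∑ j ∈ S m, r j ^ (-s) ≤ ∑ j ∈ S m, ((2:ℝ)^m * δ) ^ (-s) :=
          Finset.sum_le_sum hb
      _ = ((S m).card : ℝ) * ((2:ℝ)^m * δ) ^ (-s) := by
          rw [Finset.sum_const, nsmul_eq_mul]
      _ ≤ 512 * 8^m * ((2:ℝ)^m * δ) ^ (-s) := by
          apply mul_le_mul_of_nonneg_right hcard (Real.rpow_nonneg (by positivity) _)
      _ = 512 * q^m * δ ^ (-s) := by
          rw [Real.mul_rpow (by positivity) hδ.le]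
          have hkey : (8:ℝ)^m * ((2:ℝ)^m) ^ (-s) = q^m := by
            have a1 : ((2:ℝ)^m : ℝ) ^ (-s) = (2:ℝ) ^ ((m:ℝ) * (-s)) := by
              rw [← Real.rpow_natCast (2:ℝ) m, ← Real.rpow_mul (by norm_num : (0:ℝ) ≤ 2)]
            have a2 : (8:ℝ)^m = (2:ℝ) ^ ((m:ℝ) * 3) := by
              rw [show (8:ℝ) = 2^(3:ℕ) by norm_num, ← pow_mul,
                ← Real.rpow_natCast (2:ℝ) (3*m)]
              congr 1; push_cast; ring
            have a3 : q^m = (2:ℝ) ^ ((m:ℝ) * (1-β)) := by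
              rw [hq, ← Real.rpow_natCast ((2:ℝ)^((1:ℝ)-β)) m,
                ← Real.rpow_mul (by norm_num : (0:ℝ) ≤ 2)]
              congr 1; ring
            rw [a1, a2, a3, ← Real.rpow_add two_pos]
            congr 1
            rw [hs]; ring
          rw [← hkey]; ring
  have hgeom : ∑ m ∈ Finset.range (M+1), q^m = (q^(M+1) - 1)/(q-1) :=
    geom_sum_eq hq1.ne' (M+1)
  have hqM : q^M ≤ (D/δ)^((1:ℝ)-β) := by
    have b1 : q^M = (2:ℝ)^((M:ℝ)*(1-β)) := by
      rw [hq, ← Real.rpow_natCast ((2:ℝ)^((1:ℝ)-β)) M,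
        ← Real.rpow_mul (by norm_num : (0:ℝ) ≤ 2)]
      congr 1; ring
    have b2 : ((2:ℝ)^M)^((1:ℝ)-β) = (2:ℝ)^((M:ℝ)*(1-β)) := by
      rw [← Real.rpow_natCast (2:ℝ) M, ← Real.rpow_mul (by norm_num : (0:ℝ) ≤ 2)]
    rw [b1, ← b2]
    exact Real.rpow_le_rpow (by positivity) h2M (by linarith)
  have hδs : (0:ℝ) ≤ δ ^ (-s) := Real.rpow_nonneg hδ.le _
  have hq0 : (0:ℝ) < q := by linarith
  calc ∑ j ∈ T, r j ^ (-s)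
      ≤ ∑ j ∈ (Finset.range (M+1)).biUnion S, r j ^ (-s) :=
        Finset.sum_le_sum_of_subset_of_nonneg hsub
          (fun j _ _ => Real.rpow_nonneg (norm_nonneg _) _)
    _ = ∑ m ∈ Finset.range (M+1), ∑ j ∈ S m, r j ^ (-s) := Finset.sum_biUnion hdisj
    _ ≤ ∑ m ∈ Finset.range (M+1), 512 * q^m * δ ^ (-s) :=
        Finset.sum_le_sum (fun m _ => hshell m)
    _ = 512 * δ ^ (-s) * ∑ m ∈ Finset.range (M+1), q^m := by
        rw [Finset.mul_sum]
        exact Finset.sum_congr rfl fun m _ => by ring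
    _ = 512 * δ ^ (-s) * ((q^(M+1) - 1)/(q-1)) := by rw [hgeom]
    _ ≤ 512 * δ ^ (-s) * (q^(M+1)/(q-1)) := by
        apply mul_le_mul_of_nonneg_left _ (by positivity)
        apply (div_le_div_iff_of_pos_right (by linarith)).2
        linarith [pow_nonneg hq0.le (M+1)]
    _ ≤ 512 * δ ^ (-s) * ((q * (D/δ)^((1:ℝ)-β))/(q-1)) := by
        apply mul_le_mul_of_nonneg_left _ (by positivity)
        apply (div_le_div_iff_of_pos_right (by linarith)).2
        calc q^(M+1) = q * q^M := by ring
          _ ≤ q * (D/δ)^((1:ℝ)-β) := mul_le_mul_of_nonneg_left hqM hq0.le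
    _ = 512 * (q/(q-1)) * D^((1:ℝ)-β) * δ ^ (-(3:ℝ)) := by
        have c1 : (D/δ)^((1:ℝ)-β) = D^((1:ℝ)-β) * δ^(-((1:ℝ)-β)) := by
          rw [Real.div_rpow hD.le hδ.le, Real.rpow_neg hδ.le, div_eq_mul_inv]
        have c2 : δ^(-s) * δ^(-((1:ℝ)-β)) = δ^(-(3:ℝ)) := by
          rw [← Real.rpow_add hδ]; congr 1; rw [hs]; ring
        rw [c1, ← c2]; ring

lemma aux_term {lam r β : ℝ} (hβ0 : 0 < β) (hβ1 : β ≤ 1) (hlam : 0 < lam) (hr : 0 < r) :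
    (Real.exp (-(lam * r)) / (4 * Real.pi * r)) ^ 2 ≤
      (16 * Real.pi ^ 2)⁻¹ * (lam ^ (-β) * r ^ (-(2 + β))) := by
  have hπ := Real.pi_pos
  have he : Real.exp (-(lam * r)) ≤ (lam * r) ^ (-β) := aux_exp hβ0 hβ1 (by positivity)
  have he1 : Real.exp (-(lam * r)) ≤ 1 := by
    rw [Real.exp_le_one_iff]
    nlinarith
  have h2 : Real.exp (-(lam * r)) ^ 2 ≤ lam ^ (-β) * r ^ (-β) := by
    rw [← Real.mul_rpow hlam.le hr.le]
    calc Real.exp (-(lam * r)) ^ 2 = Real.exp (-(lam * r)) * Real.exp (-(lam * r)) := sq _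
      _ ≤ (lam * r) ^ (-β) * 1 :=
          mul_le_mul he he1 (Real.exp_pos _).le (Real.rpow_nonneg (by positivity) _)
      _ = (lam * r) ^ (-β) := mul_one _
  have h3 : r ^ (-β) * (r ^ 2)⁻¹ = r ^ (-(2 + β)) := by
    have e1 : (r ^ 2)⁻¹ = r ^ (-(2:ℝ)) := by
      rw [Real.rpow_neg hr.le, Real.rpow_two]
    rw [e1, ← Real.rpow_add hr]
    congr 1; ring
  have hd : (0:ℝ) < 16 * Real.pi ^ 2 * r ^ 2 := by positivity
  calc (Real.exp (-(lam * r)) / (4 * Real.pi * r)) ^ 2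
      = Real.exp (-(lam * r)) ^ 2 / (16 * Real.pi ^ 2 * r ^ 2) := by
        rw [div_pow]; congr 1; ring
    _ ≤ (lam ^ (-β) * r ^ (-β)) / (16 * Real.pi ^ 2 * r ^ 2) := by gcongr
    _ = (16 * Real.pi ^ 2)⁻¹ * (lam ^ (-β) * (r ^ (-β) * (r ^ 2)⁻¹)) := by
        field_simp
    _ = (16 * Real.pi ^ 2)⁻¹ * (lam ^ (-β) * r ^ (-(2 + β))) := by rw [h3]


/-- (d = 3). Under Assumptions (A) and (B), for fixed `β ∈ (0,1)` there are
`C > 0` and `N₀` such that for all `N ≥ N₀` and all `λ > 0`,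
`(1/N²)·Σ_{i≠j} (e^{−λ|x_i−x_j|}/(4π|x_i−x_j|))² ≤ C·λ^{−β}`. -/
theorem stmt_7
    (β : ℝ) (hβ0 : 0 < β) (hβ1 : β < 1)
    (U : EuclideanSpace ℝ (Fin 3) → ℝ)
    (hU_nonneg : ∀ y, 0 ≤ U y)
    (hU_bdd : ∃ M : ℝ, ∀ y, U y ≤ M)
    (hU_supp : HasCompactSupport U)
    (hU_int : ∫ y, U y = 1)
    (x : (N : ℕ) → Fin N → EuclideanSpace ℝ (Fin 3))
    (hx_supp : ∀ N (j : Fin N), x N j ∈ tsupport U)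
    (hA : ∀ f : EuclideanSpace ℝ (Fin 3) → ℂ, Continuous f → (∃ M, ∀ y, ‖f y‖ ≤ M) →
      Tendsto (fun N : ℕ => (N : ℂ)⁻¹ * ∑ j : Fin N, f (x N j)) atTop
        (𝓝 (∫ y, f y * (U y : ℂ))))
    (ℓ : ℝ) (hℓ : 0 < ℓ)
    (hB : ∀ N : ℕ, ∀ i j : Fin N, i ≠ j →
      ℓ * (N : ℝ) ^ (-(1 : ℝ) / 3) ≤ ‖x N i - x N j‖) :
    ∃ C : ℝ, 0 < C ∧ ∃ N₀ : ℕ, ∀ N : ℕ, N₀ ≤ N → ∀ lam : ℝ, 0 < lam →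
      ((N : ℝ) ^ 2)⁻¹ * ∑ i : Fin N, ∑ j : Fin N,
          (if i = j then 0 else
            (Real.exp (-(lam * ‖x N i - x N j‖)) / (4 * π * ‖x N i - x N j‖)) ^ 2)
        ≤ C * lam ^ (-β) := by
  have hπ := Real.pi_pos
  obtain ⟨R0, hR0⟩ := hU_supp.isBounded.subset_closedBall 0
  set R : ℝ := max R0 0 with hRdef
  have hR : tsupport U ⊆ Metric.closedBall 0 R :=
    hR0.trans (Metric.closedBall_subset_closedBall (le_max_left _ _))
  have hRnn : (0:ℝ) ≤ R := le_max_right _ _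
  set D : ℝ := 2 * R + ℓ with hDdef
  have hD : (0:ℝ) < D := by positivity
  set q : ℝ := (2:ℝ) ^ ((1:ℝ) - β) with hqdef
  have hq1 : 1 < q := by
    rw [hqdef]
    exact (Real.one_lt_rpow_iff_of_pos two_pos).2 (Or.inl ⟨one_lt_two, by linarith⟩)
  set A : ℝ := 512 * (q / (q - 1)) * D ^ ((1:ℝ) - β) with hAdef
  have hA0 : 0 < A := by
    rw [hAdef]
    have : (0:ℝ) < D ^ ((1:ℝ) - β) := Real.rpow_pos_of_pos hD _
    have hq0 : (0:ℝ) < q / (q - 1) := by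
      apply div_pos <;> linarith
    positivity
  refine ⟨A / (ℓ ^ 3 * (16 * π ^ 2)), by positivity, 1, ?_⟩
  intro N hN lam hlam
  have hN0 : (0:ℝ) < (N:ℝ) := by exact_mod_cast Nat.lt_of_lt_of_le Nat.zero_lt_one hN
  have hN1 : (1:ℝ) ≤ (N:ℝ) := by exact_mod_cast hN
  set δ : ℝ := ℓ * (N : ℝ) ^ (-(1 : ℝ) / 3) with hδdef
  have hδ0 : 0 < δ := by
    apply mul_pos hℓ
    exact Real.rpow_pos_of_pos hN0 _
  have hδℓ : δ ≤ ℓ := by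
    rw [hδdef]
    nth_rewrite 2 [← mul_one ℓ]
    apply mul_le_mul_of_nonneg_left _ hℓ.le
    exact Real.rpow_le_one_of_one_le_of_nonpos hN1 (by norm_num)
  have hδD : δ ≤ D := by rw [hDdef]; linarith
  have hnormR : ∀ j : Fin N, ‖x N j‖ ≤ R := by
    intro j
    have := hR (hx_supp N j)
    rwa [Metric.mem_closedBall, dist_zero_right] at this
  have hfar : ∀ i j : Fin N, ‖x N i - x N j‖ ≤ D := by
    intro i j
    calc ‖x N i - x N j‖ ≤ ‖x N i‖ + ‖x N j‖ := norm_sub_le _ _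
      _ ≤ R + R := add_le_add (hnormR i) (hnormR j)
      _ ≤ D := by rw [hDdef]; linarith
  have hsep : ∀ i j : Fin N, i ≠ j → δ ≤ ‖x N i - x N j‖ := hB N
  have hδ3 : δ ^ (-(3:ℝ)) = (ℓ ^ 3)⁻¹ * (N:ℝ) := by
    have e1 : ((N:ℝ) ^ (-(1:ℝ)/3)) ^ (-(3:ℝ)) = (N:ℝ) := by
      rw [← Real.rpow_mul hN0.le]
      norm_num
    have e2 : ℓ ^ (-(3:ℝ)) = (ℓ ^ 3)⁻¹ := by
      rw [Real.rpow_neg hℓ.le, show (3:ℝ) = ((3:ℕ):ℝ) by norm_num, Real.rpow_natCast]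
    rw [hδdef, Real.mul_rpow hℓ.le (Real.rpow_nonneg hN0.le _), e1, e2]
  have hpack : ∀ i : Fin N, ∑ j ∈ Finset.univ.erase i, ‖x N i - x N j‖ ^ (-(2+β))
      ≤ A * ((ℓ ^ 3)⁻¹ * (N:ℝ)) := by
    intro i
    have h := aux_pack β hβ0 hβ1 (x N) δ D hδ0 hδD hsep i (fun j => hfar i j)
    rw [hδ3] at h
    exact h
  have hrow : ∀ i : Fin N,
      ∑ j : Fin N, (if i = j then 0 else
        (Real.exp (-(lam * ‖x N i - x N j‖)) / (4 * π * ‖x N i - x N j‖)) ^ 2)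
      ≤ (16 * π ^ 2)⁻¹ * lam ^ (-β) * (A * ((ℓ ^ 3)⁻¹ * (N:ℝ))) := by
    intro i
    have e0 : ∑ j : Fin N, (if i = j then 0 else
          (Real.exp (-(lam * ‖x N i - x N j‖)) / (4 * π * ‖x N i - x N j‖)) ^ 2)
        = ∑ j ∈ Finset.univ.erase i,
          (Real.exp (-(lam * ‖x N i - x N j‖)) / (4 * π * ‖x N i - x N j‖)) ^ 2 := by
      rw [← Finset.sum_erase_add _ _ (Finset.mem_univ i), if_pos rfl, add_zero]
      exact Finset.sum_congr rfl fun j hj => if_neg (fun h => ((Finset.mem_erase.1 hj).1 h.symm))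
    rw [e0]
    have hnn : (0:ℝ) ≤ (16 * π ^ 2)⁻¹ * lam ^ (-β) :=
      mul_nonneg (by positivity) (Real.rpow_nonneg hlam.le _)
    calc ∑ j ∈ Finset.univ.erase i,
          (Real.exp (-(lam * ‖x N i - x N j‖)) / (4 * π * ‖x N i - x N j‖)) ^ 2
        ≤ ∑ j ∈ Finset.univ.erase i,
            (16 * π ^ 2)⁻¹ * (lam ^ (-β) * ‖x N i - x N j‖ ^ (-(2+β))) := by
          apply Finset.sum_le_sum
          intro j hj
          have hij : i ≠ j := fun h => (Finset.mem_erase.1 hj).1 h.symm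
          exact aux_term hβ0 hβ1.le hlam (hδ0.trans_le (hsep i j hij))
      _ = (16 * π ^ 2)⁻¹ * lam ^ (-β) *
            ∑ j ∈ Finset.univ.erase i, ‖x N i - x N j‖ ^ (-(2+β)) := by
          rw [Finset.mul_sum]
          exact Finset.sum_congr rfl fun j _ => by ring
      _ ≤ (16 * π ^ 2)⁻¹ * lam ^ (-β) * (A * ((ℓ ^ 3)⁻¹ * (N:ℝ))) :=
          mul_le_mul_of_nonneg_left (hpack i) hnn
  have htot : ∑ i : Fin N, ∑ j : Fin N, (if i = j then 0 else
        (Real.exp (-(lam * ‖x N i - x N j‖)) / (4 * π * ‖x N i - x N j‖)) ^ 2)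
      ≤ (N:ℝ) * ((16 * π ^ 2)⁻¹ * lam ^ (-β) * (A * ((ℓ ^ 3)⁻¹ * (N:ℝ)))) := by
    calc ∑ i : Fin N, ∑ j : Fin N, (if i = j then 0 else
          (Real.exp (-(lam * ‖x N i - x N j‖)) / (4 * π * ‖x N i - x N j‖)) ^ 2)
        ≤ ∑ _i : Fin N, (16 * π ^ 2)⁻¹ * lam ^ (-β) * (A * ((ℓ ^ 3)⁻¹ * (N:ℝ))) :=
          Finset.sum_le_sum fun i _ => hrow i
      _ = (N:ℝ) * ((16 * π ^ 2)⁻¹ * lam ^ (-β) * (A * ((ℓ ^ 3)⁻¹ * (N:ℝ)))) := by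
          rw [Finset.sum_const, nsmul_eq_mul, Finset.card_univ, Fintype.card_fin]
  have hfinal : ((N:ℝ) ^ 2)⁻¹ * ((N:ℝ) * ((16 * π ^ 2)⁻¹ * lam ^ (-β) * (A * ((ℓ ^ 3)⁻¹ * (N:ℝ)))))
      = A / (ℓ ^ 3 * (16 * π ^ 2)) * lam ^ (-β) := by
    field_simp
  calc ((N:ℝ) ^ 2)⁻¹ * ∑ i : Fin N, ∑ j : Fin N, (if i = j then 0 else
        (Real.exp (-(lam * ‖x N i - x N j‖)) / (4 * π * ‖x N i - x N j‖)) ^ 2)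
      ≤ ((N:ℝ) ^ 2)⁻¹ * ((N:ℝ) * ((16 * π ^ 2)⁻¹ * lam ^ (-β) * (A * ((ℓ ^ 3)⁻¹ * (N:ℝ))))) :=
        mul_le_mul_of_nonneg_left htot (by positivity)
    _ = A / (ℓ ^ 3 * (16 * π ^ 2)) * lam ^ (-β) := hfinal
end
end

section
/- Let d = 2 and fix β ∈ (0,1/2). For λ > 0 and r > 0 define K_λ(r) = ∫_0^∞ exp(−t − λ²·r²/(4t))·t^{−1} dt (the integral representation of 2·K₀(λr), where K₀ is the modified Bessel function of second kind and order zero). Under Assumptions (A) and (B), there exist a constant C > 0 and N₀ ∈ ℕ such that for every N ≥ N₀ and every λ > 0, (1/(16π²·N²))·Σ_{1≤i,j≤N, i≠j} K_λ(|x_{N,i} − x_{N,j}|)² ≤ C·λ^{−4β}. -/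
open MeasureTheory Filter Finset Real Topology

noncomputable section

open Metric

local notation "Eu" => EuclideanSpace ℝ (Fin 2)

lemma exp_neg_le_rpow {β x : ℝ} (hβ0 : 0 < β) (hβ1 : β ≤ 1) (hx : 0 < x) :
    Real.exp (-x) ≤ x ^ (-β) := by
  have h1 : x ^ β ≤ Real.exp x := by
    have h2 : x ^ β ≤ 1 + x := by
      rcases le_total x 1 with h | h
      · calc x ^ β ≤ 1 := Real.rpow_le_one hx.le h hβ0.le
          _ ≤ 1 + x := by linarith
      · calc x ^ β ≤ x ^ (1:ℝ) := Real.rpow_le_rpow_of_exponent_le h hβ1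
          _ = x := Real.rpow_one x
          _ ≤ 1 + x := by linarith
    exact h2.trans (by linarith [Real.add_one_le_exp x])
  rw [Real.exp_neg, Real.rpow_neg hx.le]
  exact inv_anti₀ (Real.rpow_pos_of_pos hx β) h1

lemma K_bound {β : ℝ} (hβ0 : 0 < β) (hβ1 : β ≤ 1) (K : ℝ → ℝ → ℝ)
    (hK : ∀ lam r : ℝ, K lam r =
      ∫ t in Set.Ioi (0 : ℝ), Real.exp (-t - lam ^ 2 * r ^ 2 / (4 * t)) / t)
    {lam r : ℝ} (hlam : 0 < lam) (hr : 0 < r) :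
    K lam r ≤ 4 ^ β * Real.Gamma β * (lam ^ (-(2*β)) * r ^ (-(2*β))) := by
  have ha : 0 < lam ^ 2 * r ^ 2 := by positivity
  set c : ℝ := 4 ^ β * (lam ^ 2 * r ^ 2) ^ (-β) with hc
  have hc0 : 0 ≤ c := by positivity
  have hint : IntegrableOn (fun t : ℝ => c * (Real.exp (-t) * t ^ (β - 1))) (Set.Ioi 0) :=
    (Real.GammaIntegral_convergent hβ0).const_mul c
  have hmono : ∀ t ∈ Set.Ioi (0:ℝ), Real.exp (-t - lam ^ 2 * r ^ 2 / (4 * t)) / t ≤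
      c * (Real.exp (-t) * t ^ (β - 1)) := by
    intro t ht
    have ht : (0:ℝ) < t := ht
    have key : Real.exp (-(lam ^ 2 * r ^ 2 / (4 * t))) ≤ c * t ^ β := by
      have h1 : Real.exp (-(lam ^ 2 * r ^ 2 / (4 * t))) ≤ (lam ^ 2 * r ^ 2 / (4 * t)) ^ (-β) :=
        exp_neg_le_rpow hβ0 hβ1 (by positivity)
      have h2 : (lam ^ 2 * r ^ 2 / (4 * t)) ^ (-β) = (lam^2*r^2) ^ (-β) * ((4:ℝ)*t) ^ β := by
        rw [Real.rpow_neg (by positivity), Real.div_rpow ha.le (by positivity),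
          Real.rpow_neg ha.le]
        field_simp
      have h3 : ((4:ℝ)*t) ^ β = 4 ^ β * t ^ β := Real.mul_rpow (by norm_num) ht.le
      calc Real.exp (-(lam ^ 2 * r ^ 2 / (4 * t))) ≤ _ := h1
        _ = c * t ^ β := by rw [h2, h3, hc]; ring
    have hts : t ^ (β - 1) = t ^ β / t := by
      rw [Real.rpow_sub ht, Real.rpow_one]
    have : Real.exp (-t - lam ^ 2 * r ^ 2 / (4 * t)) =
        Real.exp (-t) * Real.exp (-(lam ^ 2 * r ^ 2 / (4 * t))) := by
      rw [← Real.exp_add]; ring_nf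
    rw [this, hts]
    rw [div_le_iff₀ ht]
    have h4 : Real.exp (-t) * Real.exp (-(lam ^ 2 * r ^ 2 / (4 * t)))
        ≤ Real.exp (-t) * (c * t ^ β) :=
      mul_le_mul_of_nonneg_left key (Real.exp_nonneg _)
    calc Real.exp (-t) * Real.exp (-(lam ^ 2 * r ^ 2 / (4 * t)))
        ≤ Real.exp (-t) * (c * t ^ β) := h4
      _ = c * (Real.exp (-t) * (t ^ β / t)) * t := by
          field_simp
  have hnn : ∀ᵐ t ∂(volume.restrict (Set.Ioi (0:ℝ))),
      0 ≤ Real.exp (-t - lam ^ 2 * r ^ 2 / (4 * t)) / t := by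
    filter_upwards [ae_restrict_mem measurableSet_Ioi] with t ht
    have : (0:ℝ) < t := ht
    positivity
  have hle : ∀ᵐ t ∂(volume.restrict (Set.Ioi (0:ℝ))),
      Real.exp (-t - lam ^ 2 * r ^ 2 / (4 * t)) / t ≤ c * (Real.exp (-t) * t ^ (β - 1)) := by
    filter_upwards [ae_restrict_mem measurableSet_Ioi] with t ht
    exact hmono t ht
  rw [hK]
  calc (∫ t in Set.Ioi (0:ℝ), Real.exp (-t - lam ^ 2 * r ^ 2 / (4 * t)) / t)
      ≤ ∫ t in Set.Ioi (0:ℝ), c * (Real.exp (-t) * t ^ (β - 1)) :=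
        integral_mono_of_nonneg hnn hint hle
    _ = c * Real.Gamma β := by
        rw [MeasureTheory.integral_const_mul, ← Real.Gamma_eq_integral hβ0]
    _ = 4 ^ β * Real.Gamma β * (lam ^ (-(2*β)) * r ^ (-(2*β))) := by
        rw [hc]
        have : (lam ^ 2 * r ^ 2) ^ (-β) = lam ^ (-(2*β)) * r ^ (-(2*β)) := by
          rw [Real.mul_rpow (by positivity) (by positivity),
            ← Real.rpow_natCast lam 2, ← Real.rpow_natCast r 2,
            ← Real.rpow_mul hlam.le, ← Real.rpow_mul hr.le]
          norm_num
        rw [this]; ring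

lemma lintegral_ball_rpow_le {s R' : ℝ} (hs0 : 0 < s) (hR' : 0 < R')
    (c : Eu) :
    ∫⁻ y in Metric.ball c R', ENNReal.ofReal (‖c - y‖ ^ (-s)) ≤
      ENNReal.ofReal (R' ^ (2 - s) * 2 ^ s) * volume (Metric.ball (0:Eu) 1)
        * (1 - ENNReal.ofReal ((2:ℝ) ^ (s-2)))⁻¹ := by
  set f : Eu → ENNReal := fun y => ENNReal.ofReal (‖c - y‖ ^ (-s)) with hf
  set A : ℕ → Set Eu := fun n => Metric.ball c (R'/2^n) \ Metric.ball c (R'/2^(n+1)) with hA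
  have hsub : Metric.ball c R' ⊆ {c} ∪ ⋃ n, A n := by
    intro y hy
    rcases eq_or_ne y c with h | h
    · exact Or.inl h
    · right
      have hd : 0 < dist y c := dist_pos.mpr h
      have hdR : dist y c < R' := mem_ball.mp hy
      have hex : ∃ n : ℕ, R' / 2 ^ (n+1) ≤ dist y c := by
        obtain ⟨n, hn⟩ := pow_unbounded_of_one_lt (R' / dist y c) (one_lt_two (α := ℝ))
        refine ⟨n, ?_⟩
        rw [div_le_iff₀ (by positivity)]
        rw [div_lt_iff₀ hd] at hn
        have h2n : (2:ℝ)^n ≤ 2^(n+1) := by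
          apply pow_le_pow_right₀ one_le_two (by omega)
        nlinarith [hd.le]
      set m := Nat.find hex with hm
      refine Set.mem_iUnion.mpr ⟨m, ?_, ?_⟩
      · show dist y c < R' / 2 ^ m
        rcases Nat.eq_zero_or_pos m with h0 | h0
        · rw [h0]; simpa using hdR
        · obtain ⟨k, hk⟩ := Nat.exists_eq_succ_of_ne_zero h0.ne'
          have := Nat.find_min hex (m := k) (by omega)
          rw [hk]
          push_neg at this
          exact this
      · show ¬ (dist y c < R' / 2 ^ (m+1))
        exact not_lt.mpr (Nat.find_spec hex)
  have hVlt : volume (Metric.ball (0:Eu) 1) < ⊤ := measure_ball_lt_top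
  have hstep : ∀ n : ℕ, ∫⁻ y in A n, f y ∂volume ≤
      ENNReal.ofReal ((R'/2^(n+1)) ^ (-s)) * (ENNReal.ofReal ((R'/2^n)^(2:ℕ)) *
        volume (Metric.ball (0:Eu) 1)) := by
    intro n
    have hmeas : MeasurableSet (A n) := measurableSet_ball.diff measurableSet_ball
    have hub : ∀ y ∈ A n, f y ≤ ENNReal.ofReal ((R'/2^(n+1)) ^ (-s)) := by
      intro y hy
      have h1 : R'/2^(n+1) ≤ dist y c := not_lt.mp (fun hlt => hy.2 (mem_ball.mpr hlt))
      have h2 : ‖c - y‖ = dist y c := by rw [dist_comm, dist_eq_norm]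
      apply ENNReal.ofReal_le_ofReal
      rw [h2, Real.rpow_neg dist_nonneg, Real.rpow_neg (by positivity : (0:ℝ) ≤ R'/2^(n+1))]
      exact inv_anti₀ (Real.rpow_pos_of_pos (by positivity) s)
        (Real.rpow_le_rpow (by positivity) h1 hs0.le)
    calc ∫⁻ y in A n, f y ∂volume
        ≤ ∫⁻ _ in A n, ENNReal.ofReal ((R'/2^(n+1)) ^ (-s)) ∂volume :=
          setLIntegral_mono' hmeas hub
      _ = ENNReal.ofReal ((R'/2^(n+1)) ^ (-s)) * volume (A n) := setLIntegral_const _ _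
      _ ≤ ENNReal.ofReal ((R'/2^(n+1)) ^ (-s)) * (ENNReal.ofReal ((R'/2^n)^(2:ℕ)) *
            volume (Metric.ball (0:Eu) 1)) := by
          gcongr
          calc volume (A n) ≤ volume (Metric.ball c (R'/2^n)) :=
                measure_mono Set.diff_subset
            _ = ENNReal.ofReal ((R'/2^n)^(2:ℕ)) * volume (Metric.ball (0:Eu) 1) := by
                rw [Measure.addHaar_ball volume c (by positivity)]
                congr 2
                simp [finrank_euclideanSpace_fin]
  have hterm : ∀ n : ℕ, (R'/2^(n+1)) ^ (-s) * (R'/2^n)^(2:ℕ) =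
      (R' ^ (2-s) * 2^s) * ((2:ℝ) ^ (s-2))^n := by
    intro n
    have p1 : (0:ℝ) < R'/2^(n+1) := by positivity
    have p2 : (0:ℝ) < R'/2^n := by positivity
    rw [← Real.rpow_natCast (R'/2^n) 2, ← Real.rpow_natCast ((2:ℝ)^(s-2)) n,
      Real.rpow_def_of_pos p1, Real.rpow_def_of_pos p2,
      Real.rpow_def_of_pos (Real.rpow_pos_of_pos two_pos _),
      Real.rpow_def_of_pos hR', Real.rpow_def_of_pos two_pos,
      Real.log_div hR'.ne' (by positivity), Real.log_div hR'.ne' (by positivity),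
      Real.log_pow, Real.log_pow, Real.log_rpow two_pos,
      ← Real.exp_add, ← Real.exp_add, ← Real.exp_add]
    congr 1
    push_cast
    ring
  calc ∫⁻ y in Metric.ball c R', f y ∂volume
      ≤ ∫⁻ y in ({c} ∪ ⋃ n, A n : Set Eu), f y ∂volume := lintegral_mono_set hsub
    _ ≤ (∫⁻ y in ({c} : Set Eu), f y ∂volume) + ∫⁻ y in (⋃ n, A n), f y ∂volume :=
        lintegral_union_le _ _ _
    _ = ∫⁻ y in (⋃ n, A n), f y ∂volume := by
        rw [setLIntegral_measure_zero _ _ (measure_singleton c), zero_add]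
    _ ≤ ∑' n, ∫⁻ y in A n, f y ∂volume := lintegral_iUnion_le _ _
    _ ≤ ∑' n, ENNReal.ofReal ((R'/2^(n+1)) ^ (-s)) * (ENNReal.ofReal ((R'/2^n)^(2:ℕ)) *
          volume (Metric.ball (0:Eu) 1)) := ENNReal.tsum_le_tsum hstep
    _ = ∑' n, ENNReal.ofReal (R' ^ (2-s) * 2^s) * (ENNReal.ofReal ((2:ℝ)^(s-2)))^n *
          volume (Metric.ball (0:Eu) 1) := by
        congr 1
        funext n
        rw [← ENNReal.ofReal_pow (by positivity), ← mul_assoc, ← ENNReal.ofReal_mul (by positivity),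
          hterm n, ENNReal.ofReal_mul (by positivity)]
    _ ≤ ENNReal.ofReal (R' ^ (2-s) * 2^s) * volume (Metric.ball (0:Eu) 1) *
          (1 - ENNReal.ofReal ((2:ℝ)^(s-2)))⁻¹ := by
        rw [ENNReal.tsum_mul_right, ENNReal.tsum_mul_left, ENNReal.tsum_geometric]
        exact le_of_eq (by ring)

lemma sum_rpow_le {s : ℝ} (hs0 : 0 < s) (hs2 : s < 2) {l R : ℝ} (hl : 0 < l) (hR : 0 < R) :
    ∃ C : ℝ, 0 < C ∧ ∀ N : ℕ, 0 < N → ∀ y : Fin N → Eu,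
      (∀ j, y j ∈ Metric.closedBall (0:Eu) R) →
      (∀ i j : Fin N, i ≠ j → l * (N:ℝ) ^ (-(1:ℝ)/2) ≤ ‖y i - y j‖) →
      ∀ i, ∑ j ∈ Finset.univ.erase i, ‖y i - y j‖ ^ (-s) ≤ C * N := by
  set V := volume (Metric.ball (0:Eu) 1) with hV
  have hVlt : V < ⊤ := measure_ball_lt_top
  have hVpos : 0 < V := measure_ball_pos _ _ one_pos
  set v := V.toReal with hv
  have hv0 : 0 < v := ENNReal.toReal_pos hVpos.ne' hVlt.ne
  set R' : ℝ := 2*R + l + 1 with hR'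
  have hR'0 : 0 < R' := by positivity
  have hq1 : ENNReal.ofReal ((2:ℝ) ^ (s-2)) < 1 := by
    rw [ENNReal.ofReal_lt_one]
    exact Real.rpow_lt_one_of_one_lt_of_neg one_lt_two (by linarith)
  set J := ENNReal.ofReal (R' ^ (2 - s) * 2 ^ s) * V * (1 - ENNReal.ofReal ((2:ℝ) ^ (s-2)))⁻¹
    with hJ
  have hJlt : J < ⊤ := by
    rw [hJ]
    apply ENNReal.mul_lt_top
    · exact ENNReal.mul_lt_top ENNReal.ofReal_lt_top hVlt
    · rw [lt_top_iff_ne_top]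
      refine ENNReal.inv_ne_top.mpr ?_
      intro h
      exact absurd (tsub_eq_zero_iff_le.mp h) (not_le.mpr hq1)
  set T : ℝ := ((4:ℝ)/3) ^ s * J.toReal with hT
  have hT0 : 0 ≤ T := by
    apply mul_nonneg (le_of_lt (Real.rpow_pos_of_pos (by norm_num) s)) ENNReal.toReal_nonneg
  refine ⟨9*(T+1)/(l^2*v), by positivity, ?_⟩
  intro N hN y hy hsep i
  set δ : ℝ := l * (N:ℝ) ^ (-(1:ℝ)/2) with hδ
  have hNpos : (0:ℝ) < N := Nat.cast_pos.mpr hN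
  have hδ0 : 0 < δ := by
    apply mul_pos hl (Real.rpow_pos_of_pos hNpos _)
  have hδl : δ ≤ l := by
    rw [hδ]
    nth_rewrite 2 [show l = l * 1 by ring]
    apply mul_le_mul_of_nonneg_left _ hl.le
    apply Real.rpow_le_one_of_one_le_of_nonpos (by exact_mod_cast hN) (by norm_num)
  set B : Fin N → Set Eu := fun j => Metric.closedBall (y j) (δ/3) with hB
  -- facts
  have hsep' : ∀ j k : Fin N, j ≠ k → δ ≤ dist (y j) (y k) := by
    intro j k hjk; rw [dist_eq_norm]; exact hsep j k hjk
  have hdisj : (↑(Finset.univ.erase i) : Set (Fin N)).PairwiseDisjoint B := by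
    intro j _ k _ hjk
    exact closedBall_disjoint_closedBall (by linarith [hsep' j k hjk])
  have hsubball : ∀ j ∈ Finset.univ.erase i, B j ⊆ Metric.ball (y i) R' := by
    intro j _ z hz
    have h1 : dist z (y j) ≤ δ/3 := mem_closedBall.mp hz
    have h2 : dist (y j) (y i) ≤ 2*R := by
      calc dist (y j) (y i) ≤ dist (y j) 0 + dist 0 (y i) := dist_triangle _ _ _
        _ ≤ R + R := by
            rw [dist_comm (0:Eu)]
            exact add_le_add (mem_closedBall.mp (hy j)) (mem_closedBall.mp (hy i))
        _ = 2*R := by ring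
    rw [mem_ball]
    calc dist z (y i) ≤ dist z (y j) + dist (y j) (y i) := dist_triangle _ _ _
      _ ≤ δ/3 + 2*R := add_le_add h1 h2
      _ < R' := by rw [hR']; linarith
  have hballvol : ∀ j : Fin N, volume (B j) = ENNReal.ofReal ((δ/3)^(2:ℕ)) * V := by
    intro j
    rw [hB]
    rw [Measure.addHaar_closedBall volume _ (by positivity)]
    congr 2
    simp [finrank_euclideanSpace_fin]
  have hptwise : ∀ j ∈ Finset.univ.erase i, ∀ z ∈ B j,
      ENNReal.ofReal (‖y i - y j‖ ^ (-s)) ≤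
        ENNReal.ofReal (((4:ℝ)/3) ^ s) * ENNReal.ofReal (‖y i - z‖ ^ (-s)) := by
    intro j hj z hz
    have hji : j ≠ i := Finset.ne_of_mem_erase hj
    have hrδ : δ ≤ ‖y i - y j‖ := by
      rw [← dist_eq_norm]; exact hsep' i j (Ne.symm hji)
    have hr0 : 0 < ‖y i - y j‖ := lt_of_lt_of_le hδ0 hrδ
    have hz1 : dist z (y j) ≤ δ/3 := mem_closedBall.mp hz
    have hiz : ‖y i - z‖ ≤ (4/3) * ‖y i - y j‖ := by
      calc ‖y i - z‖ = dist (y i) z := (dist_eq_norm _ _).symm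
        _ ≤ dist (y i) (y j) + dist (y j) z := dist_triangle _ _ _
        _ ≤ ‖y i - y j‖ + δ/3 := by
            rw [dist_eq_norm]
            exact add_le_add le_rfl (by rw [dist_comm] at hz1; exact hz1)
        _ ≤ ‖y i - y j‖ + ‖y i - y j‖/3 := by linarith
        _ = (4/3) * ‖y i - y j‖ := by ring
    have hiz0 : 0 < ‖y i - z‖ := by
      rw [← dist_eq_norm]
      have : δ / 3 + dist (y i) z ≥ dist (y i) (y j) := by
        calc dist (y i) (y j) ≤ dist (y i) z + dist z (y j) := dist_triangle _ _ _
          _ ≤ dist (y i) z + δ/3 := by linarith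
          _ = δ/3 + dist (y i) z := by ring
      have := hsep' i j (Ne.symm hji)
      linarith [dist_nonneg (x := y i) (y := z)]
    rw [← ENNReal.ofReal_mul (by positivity)]
    apply ENNReal.ofReal_le_ofReal
    have key : (3/4 : ℝ) * ‖y i - z‖ ≤ ‖y i - y j‖ := by linarith
    calc ‖y i - y j‖ ^ (-s) ≤ ((3/4 : ℝ) * ‖y i - z‖) ^ (-s) := by
          rw [Real.rpow_neg hr0.le, Real.rpow_neg (by positivity)]
          exact inv_anti₀ (Real.rpow_pos_of_pos (by positivity) s)
            (Real.rpow_le_rpow (by positivity) key hs0.le)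
      _ = ((4:ℝ)/3) ^ s * ‖y i - z‖ ^ (-s) := by
          rw [Real.mul_rpow (by norm_num) hiz0.le]
          congr 1
          rw [Real.rpow_neg (by norm_num : (0:ℝ) ≤ 3/4),
            ← Real.inv_rpow (by norm_num : (0:ℝ) ≤ 3/4)]
          norm_num
  -- main ENNReal chain
  set S : ℝ := ∑ j ∈ Finset.univ.erase i, ‖y i - y j‖ ^ (-s) with hS
  have hS0 : 0 ≤ S := Finset.sum_nonneg fun j _ => by positivity
  set g : Eu → ENNReal := fun z => ENNReal.ofReal (‖y i - z‖ ^ (-s)) with hg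
  have key : ENNReal.ofReal S * (ENNReal.ofReal ((δ/3)^(2:ℕ)) * V) ≤
      ENNReal.ofReal (((4:ℝ)/3) ^ s) * J := by
    have hsum : ENNReal.ofReal S =
        ∑ j ∈ Finset.univ.erase i, ENNReal.ofReal (‖y i - y j‖ ^ (-s)) :=
      ENNReal.ofReal_sum_of_nonneg (fun j _ => by positivity)
    rw [hsum, Finset.sum_mul]
    calc ∑ j ∈ Finset.univ.erase i, ENNReal.ofReal (‖y i - y j‖ ^ (-s)) *
            (ENNReal.ofReal ((δ/3)^(2:ℕ)) * V)
        = ∑ j ∈ Finset.univ.erase i, ∫⁻ _ in B j, ENNReal.ofReal (‖y i - y j‖ ^ (-s)) := by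
          refine Finset.sum_congr rfl fun j hj => ?_
          rw [setLIntegral_const, hballvol j]
      _ ≤ ∑ j ∈ Finset.univ.erase i, ∫⁻ z in B j, ENNReal.ofReal (((4:ℝ)/3) ^ s) * g z :=
          Finset.sum_le_sum fun j hj =>
            setLIntegral_mono' measurableSet_closedBall (hptwise j hj)
      _ = ∑ j ∈ Finset.univ.erase i, ENNReal.ofReal (((4:ℝ)/3) ^ s) * ∫⁻ z in B j, g z :=
          Finset.sum_congr rfl fun j _ => lintegral_const_mul' _ _ ENNReal.ofReal_ne_top
      _ = ENNReal.ofReal (((4:ℝ)/3) ^ s) * ∑ j ∈ Finset.univ.erase i, ∫⁻ z in B j, g z :=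
          (Finset.mul_sum _ _ _).symm
      _ = ENNReal.ofReal (((4:ℝ)/3) ^ s) * ∫⁻ z in ⋃ j ∈ Finset.univ.erase i, B j, g z := by
          rw [lintegral_biUnion_finset hdisj (fun b _ => measurableSet_closedBall) g]
      _ ≤ ENNReal.ofReal (((4:ℝ)/3) ^ s) * ∫⁻ z in Metric.ball (y i) R', g z := by
          gcongr
          exact Set.iUnion₂_subset hsubball
      _ ≤ ENNReal.ofReal (((4:ℝ)/3) ^ s) * J := by
          gcongr
          exact lintegral_ball_rpow_le hs0 hR'0 (y i)
  have hfin : ENNReal.ofReal (((4:ℝ)/3)^s) * J ≠ ⊤ :=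
    ENNReal.mul_ne_top ENNReal.ofReal_ne_top hJlt.ne
  have h2 := ENNReal.toReal_mono hfin key
  rw [ENNReal.toReal_mul, ENNReal.toReal_mul, ENNReal.toReal_mul,
    ENNReal.toReal_ofReal hS0, ENNReal.toReal_ofReal (by positivity),
    ENNReal.toReal_ofReal (by positivity)] at h2
  -- h2 : S * ((δ/3)^2 * v) ≤ (4/3)^s * J.toReal = T
  have hNe : ((N:ℝ) ^ (-(1:ℝ)/2))^(2:ℕ) = (N:ℝ)⁻¹ := by
    rw [← Real.rpow_natCast ((N:ℝ) ^ (-(1:ℝ)/2)) 2, ← Real.rpow_mul hNpos.le]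
    norm_num [Real.rpow_neg_one]
  have hδ2 : (δ/3)^(2:ℕ) = l^2 * (N:ℝ)⁻¹ / 9 := by
    rw [hδ, div_pow, mul_pow, hNe]; ring
  rw [hδ2, ← hT] at h2
  have hNne : (N:ℝ) ≠ 0 := hNpos.ne'
  calc S = (S * (l^2 * (N:ℝ)⁻¹ / 9 * v)) * (9*N/(l^2*v)) := by
        field_simp
    _ ≤ T * (9*N/(l^2*v)) := by
        apply mul_le_mul_of_nonneg_right h2 (by positivity)
    _ ≤ 9*(T+1)/(l^2*v) * N := by
        have h3 : T * (9*(N:ℝ)/(l^2*v)) ≤ (T+1) * (9*N/(l^2*v)) := by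
          apply mul_le_mul_of_nonneg_right (by linarith) (by positivity)
        calc T * (9*(N:ℝ)/(l^2*v)) ≤ (T+1) * (9*N/(l^2*v)) := h3
          _ = 9*(T+1)/(l^2*v) * N := by ring

/-- (d = 2). With `K_λ(r) = ∫_0^∞ exp(−t − λ²r²/(4t)) t⁻¹ dt`, under
Assumptions (A) and (B), for fixed `β ∈ (0,1/2)` there are `C > 0` and `N₀` such that
for all `N ≥ N₀` and all `λ > 0`,
`(1/(16π²N²))·Σ_{i≠j} K_λ(|x_i−x_j|)² ≤ C·λ^{−4β}`. -/
theorem stmt_8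
    (β : ℝ) (hβ0 : 0 < β) (hβ1 : β < 1 / 2)
    (K : ℝ → ℝ → ℝ)
    (hK : ∀ lam r : ℝ, K lam r =
      ∫ t in Set.Ioi (0 : ℝ), Real.exp (-t - lam ^ 2 * r ^ 2 / (4 * t)) / t)
    (U : EuclideanSpace ℝ (Fin 2) → ℝ)
    (hU_nonneg : ∀ y, 0 ≤ U y)
    (hU_bdd : ∃ M : ℝ, ∀ y, U y ≤ M)
    (hU_supp : HasCompactSupport U)
    (hU_int : ∫ y, U y = 1)
    (x : (N : ℕ) → Fin N → EuclideanSpace ℝ (Fin 2))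
    (hx_supp : ∀ N (j : Fin N), x N j ∈ tsupport U)
    (hA : ∀ f : EuclideanSpace ℝ (Fin 2) → ℂ, Continuous f → (∃ M, ∀ y, ‖f y‖ ≤ M) →
      Tendsto (fun N : ℕ => (N : ℂ)⁻¹ * ∑ j : Fin N, f (x N j)) atTop
        (𝓝 (∫ y, f y * (U y : ℂ))))
    (ℓ : ℝ) (hℓ : 0 < ℓ)
    (hB : ∀ N : ℕ, ∀ i j : Fin N, i ≠ j →
      ℓ * (N : ℝ) ^ (-(1 : ℝ) / 2) ≤ ‖x N i - x N j‖) :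
    ∃ C : ℝ, 0 < C ∧ ∃ N₀ : ℕ, ∀ N : ℕ, N₀ ≤ N → ∀ lam : ℝ, 0 < lam →
      (16 * π ^ 2 * (N : ℝ) ^ 2)⁻¹ * ∑ i : Fin N, ∑ j : Fin N,
          (if i = j then 0 else (K lam ‖x N i - x N j‖) ^ 2)
        ≤ C * lam ^ (-(4 * β)) := by
  obtain ⟨R0, hR0⟩ := hU_supp.isBounded.subset_closedBall (0 : Eu)
  set R : ℝ := max R0 1 with hRdef
  have hR : 0 < R := lt_of_lt_of_le one_pos (le_max_right _ _)
  have hsupp : tsupport U ⊆ Metric.closedBall 0 R :=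
    hR0.trans (Metric.closedBall_subset_closedBall (le_max_left _ _))
  obtain ⟨C₂, hC₂0, hC₂⟩ := sum_rpow_le (s := 4*β) (by linarith) (by linarith) hℓ hR
  set Cβ : ℝ := 4 ^ β * Real.Gamma β with hCβ
  have hCβ0 : 0 < Cβ :=
    mul_pos (Real.rpow_pos_of_pos (by norm_num) β) (Real.Gamma_pos_of_pos hβ0)
  have hKnn : ∀ a b : ℝ, 0 ≤ K a b := by
    intro a b
    rw [hK]
    apply setIntegral_nonneg measurableSet_Ioi
    intro t ht
    have h : (0:ℝ) < t := ht
    positivity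
  refine ⟨(16*π^2)⁻¹ * Cβ^2 * C₂ + 1, by positivity, 1, ?_⟩
  intro N hN lam hlam
  have hNpos : (0:ℝ) < N := by exact_mod_cast hN
  have hrpos : ∀ i j : Fin N, i ≠ j → 0 < ‖x N i - x N j‖ := by
    intro i j hij
    calc (0:ℝ) < ℓ * (N:ℝ) ^ (-(1:ℝ)/2) := by positivity
      _ ≤ ‖x N i - x N j‖ := hB N i j hij
  have inner : ∀ i : Fin N, ∑ j : Fin N, (if i = j then 0 else (K lam ‖x N i - x N j‖) ^ 2)
      ≤ Cβ^2 * lam ^ (-(4*β)) * (C₂ * N) := by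
    intro i
    have hrw : ∑ j : Fin N, (if i = j then 0 else (K lam ‖x N i - x N j‖) ^ 2)
        = ∑ j ∈ Finset.univ.erase i, (K lam ‖x N i - x N j‖) ^ 2 := by
      rw [← Finset.sum_erase (f := fun j => if i = j then 0 else (K lam ‖x N i - x N j‖) ^ 2)
        (a := i) Finset.univ (by simp)]
      exact Finset.sum_congr rfl fun j hj =>
        if_neg fun h => (Finset.ne_of_mem_erase hj) h.symm
    rw [hrw]
    have step : ∀ j ∈ Finset.univ.erase i, (K lam ‖x N i - x N j‖) ^ 2 ≤
        Cβ^2 * lam ^ (-(4*β)) * ‖x N i - x N j‖ ^ (-(4*β)) := by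
      intro j hj
      have hij : i ≠ j := fun h => (Finset.ne_of_mem_erase hj) h.symm
      have hr := hrpos i j hij
      have h1 := K_bound hβ0 (by linarith) K hK hlam hr
      have hsq : (K lam ‖x N i - x N j‖) ^ 2 ≤
          (Cβ * (lam ^ (-(2*β)) * ‖x N i - x N j‖ ^ (-(2*β)))) ^ 2 :=
        pow_le_pow_left₀ (hKnn _ _) h1 2
      refine hsq.trans_eq ?_
      have e : ∀ a : ℝ, 0 < a → (a ^ (-(2*β)))^(2:ℕ) = a ^ (-(4*β)) := by
        intro a ha
        rw [← Real.rpow_natCast (a ^ (-(2*β))) 2, ← Real.rpow_mul ha.le]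
        congr 1
        push_cast
        ring
      rw [mul_pow, mul_pow, mul_pow, e lam hlam, e _ hr]
      ring
    calc ∑ j ∈ Finset.univ.erase i, (K lam ‖x N i - x N j‖) ^ 2
        ≤ ∑ j ∈ Finset.univ.erase i, Cβ^2 * lam ^ (-(4*β)) * ‖x N i - x N j‖ ^ (-(4*β)) :=
          Finset.sum_le_sum step
      _ = Cβ^2 * lam ^ (-(4*β)) * ∑ j ∈ Finset.univ.erase i, ‖x N i - x N j‖ ^ (-(4*β)) :=
          (Finset.mul_sum _ _ _).symm
      _ ≤ Cβ^2 * lam ^ (-(4*β)) * (C₂ * N) := by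
          apply mul_le_mul_of_nonneg_left _ (by positivity)
          exact hC₂ N hN (x N) (fun j => hsupp (hx_supp N j)) (hB N) i
  have hsum : ∑ i : Fin N, ∑ j : Fin N, (if i = j then 0 else (K lam ‖x N i - x N j‖) ^ 2)
      ≤ N * (Cβ^2 * lam ^ (-(4*β)) * (C₂ * N)) := by
    calc ∑ i : Fin N, ∑ j : Fin N, (if i = j then 0 else (K lam ‖x N i - x N j‖) ^ 2)
        ≤ ∑ _i : Fin N, Cβ^2 * lam ^ (-(4*β)) * (C₂ * N) :=
          Finset.sum_le_sum fun i _ => inner i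
      _ = N * (Cβ^2 * lam ^ (-(4*β)) * (C₂ * N)) := by
          rw [Finset.sum_const, Finset.card_univ, Fintype.card_fin, nsmul_eq_mul]
  have hπ : (0:ℝ) < π := Real.pi_pos
  calc (16 * π ^ 2 * (N : ℝ) ^ 2)⁻¹ * ∑ i : Fin N, ∑ j : Fin N,
          (if i = j then 0 else (K lam ‖x N i - x N j‖) ^ 2)
      ≤ (16 * π ^ 2 * (N : ℝ) ^ 2)⁻¹ * (N * (Cβ^2 * lam ^ (-(4*β)) * (C₂ * N))) := by
        apply mul_le_mul_of_nonneg_left hsum (by positivity)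
    _ = (16*π^2)⁻¹ * Cβ^2 * C₂ * lam ^ (-(4*β)) := by
        field_simp
    _ ≤ ((16*π^2)⁻¹ * Cβ^2 * C₂ + 1) * lam ^ (-(4*β)) := by
        apply mul_le_mul_of_nonneg_right _ (by positivity)
        linarith [Real.rpow_pos_of_pos hlam (-(4*β))]
end
end

section
/- Let d = 3 and fix λ₀ > 0. Under Assumptions (A) and (B), let a : ℝ³ → ℝ be a bounded continuous function with a(x) ≥ a₀ for some constant a₀ > 0. For λ > 0 and N ∈ ℕ, let Ξ_N^λ be the N×N Hermitian matrix with entries [Ξ_N^λ]_{jj} = N·a(x_{N,j}) + (λ − λ₀)/(4π) on the diagonal and [Ξ_N^λ]_{ij} = − e^{−λ|x_{N,i} − x_{N,j}|}/(4π·|x_{N,i} − x_{N,j}|) for i ≠ j. Then there exists λ* > 0 such that for every λ ≥ λ* there are a constant γ_λ > 0 and N_λ ∈ ℕ such that for all N ≥ N_λ and all vectors (p_1, …, p_N) ∈ ℂ^N, Σ_{i,j=1}^N conj(p_i)·[Ξ_N^λ]_{ij}·p_j ≥ γ_λ·N·Σ_{j=1}^N |p_j|²; equivalently, (1/N)·Ξ_N^λ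 ≥ γ_λ·Id as Hermitian matrices. -/
open MeasureTheory Filter Finset Real Topology

noncomputable section


private lemma geomAux (x : ℝ) (h0 : 0 ≤ x) (h1 : x < 1) (n : ℕ) :
    ∑ i ∈ Finset.range n, x ^ i ≤ (1 - x)⁻¹ := by
  have h1x : 0 < 1 - x := by linarith
  rw [inv_eq_one_div, le_div_iff₀ h1x]
  have h := geom_sum_mul x n
  have hxn : 0 ≤ x ^ n := pow_nonneg h0 n
  nlinarith

private lemma expSum (s : ℝ) (hs : 0 < s) (K : Finset ℕ) (hK : ∀ m ∈ K, 1 ≤ m) :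
    ∑ m ∈ K, Real.exp (-(s / 2) * m) ≤ 2 / s := by
  set y := Real.exp (-(s / 2)) with hy
  have hy0 : 0 < y := Real.exp_pos _
  have hy1 : y < 1 := Real.exp_lt_one_iff.mpr (by linarith)
  have hterm : ∀ m : ℕ, Real.exp (-(s / 2) * m) = y ^ m := fun m => by
    rw [mul_comm, Real.exp_nat_mul]
  rw [Finset.sum_congr rfl fun m _ => hterm m]
  set T := K.sup id with hT
  have hsub : K ⊆ Finset.Icc 1 T := fun m hm =>
    Finset.mem_Icc.mpr ⟨hK m hm, Finset.le_sup (f := id) hm⟩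
  have h1 : ∑ m ∈ K, y ^ m ≤ ∑ m ∈ Finset.Icc 1 T, y ^ m :=
    Finset.sum_le_sum_of_subset_of_nonneg hsub (fun m _ _ => pow_nonneg hy0.le m)
  have h2 : ∑ m ∈ Finset.Icc 1 T, y ^ m = y * ∑ i ∈ Finset.range T, y ^ i := by
    rw [← Finset.Ico_add_one_right_eq_Icc, Finset.sum_Ico_eq_sum_range, Finset.mul_sum]
    simp [pow_succ, pow_add, mul_comm]
  have h3 : ∑ i ∈ Finset.range T, y ^ i ≤ (1 - y)⁻¹ := geomAux y hy0.le hy1 T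
  have h1y : 0 < 1 - y := by linarith
  have hE := Real.add_one_le_exp (s / 2)
  have hyE : y = (Real.exp (s / 2))⁻¹ := by rw [hy, ← Real.exp_neg]
  have hEpos : 0 < Real.exp (s / 2) := Real.exp_pos _
  have hy_le : y * (s + 2) ≤ 2 := by
    rw [hyE, inv_mul_le_iff₀ hEpos]
    nlinarith
  calc ∑ m ∈ K, y ^ m ≤ y * ∑ i ∈ Finset.range T, y ^ i := by rw [← h2]; exact h1
    _ ≤ y * (1 - y)⁻¹ := mul_le_mul_of_nonneg_left h3 hy0.le
    _ ≤ 2 / s := by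
        rw [← div_eq_mul_inv, div_le_div_iff₀ h1y hs]
        nlinarith

private lemma packingAux {ι : Type*} (s : Finset ι)
    (p : ι → EuclideanSpace ℝ (Fin 3)) (c : EuclideanSpace ℝ (Fin 3))
    (δ R₁ R₂ : ℝ) (hδ : 0 < δ) (hR₁ : 0 ≤ R₁) (hR12 : R₁ ≤ R₂)
    (hsep : ∀ i ∈ s, ∀ j ∈ s, i ≠ j → δ ≤ dist (p i) (p j))
    (hlow : ∀ j ∈ s, R₁ + δ / 2 ≤ dist (p j) c)
    (hhigh : ∀ j ∈ s, dist (p j) c + δ / 2 ≤ R₂) :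
    R₁ ^ 3 + (s.card : ℝ) * (δ / 2) ^ 3 ≤ R₂ ^ 3 := by
  classical
  have hR₂ : 0 ≤ R₂ := le_trans hR₁ hR12
  set v := volume (Metric.ball (0 : EuclideanSpace ℝ (Fin 3)) 1) with hv
  have hv0 : v ≠ 0 := (Metric.measure_ball_pos volume (0 : EuclideanSpace ℝ (Fin 3)) one_pos).ne'
  have hvt : v ≠ ⊤ := measure_ball_lt_top.ne
  have hball : ∀ (z : EuclideanSpace ℝ (Fin 3)) (r : ℝ), 0 ≤ r →
      volume (Metric.ball z r) = ENNReal.ofReal (r ^ 3) * v := by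
    intro z r hr
    rw [hv, Measure.addHaar_ball _ _ hr, finrank_euclideanSpace_fin]
  have hcball : volume (Metric.closedBall c R₂) = ENNReal.ofReal (R₂ ^ 3) * v := by
    rw [hv, Measure.addHaar_closedBall _ _ hR₂, finrank_euclideanSpace_fin]
  have hdisj : (s : Set ι).PairwiseDisjoint (fun j => Metric.ball (p j) (δ / 2)) := by
    intro i hi j hj hij
    exact Metric.ball_disjoint_ball (by
      have := hsep i hi j hj hij
      linarith)
  have hsum : ∑ j ∈ s, volume (Metric.ball (p j) (δ / 2)) =
      volume (⋃ j ∈ s, Metric.ball (p j) (δ / 2)) :=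
    (measure_biUnion_finset hdisj fun j _ => measurableSet_ball).symm
  have hdisj0 : Disjoint (Metric.ball c R₁) (⋃ j ∈ s, Metric.ball (p j) (δ / 2)) := by
    rw [Set.disjoint_iUnion₂_right]
    intro j hj
    refine Metric.ball_disjoint_ball ?_
    have h1 := hlow j hj
    have h2 : dist c (p j) = dist (p j) c := dist_comm _ _
    linarith
  have hsub : Metric.ball c R₁ ∪ (⋃ j ∈ s, Metric.ball (p j) (δ / 2)) ⊆
      Metric.closedBall c R₂ := by
    apply Set.union_subset
    · exact Metric.ball_subset_closedBall.trans (Metric.closedBall_subset_closedBall hR12)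
    · refine Set.iUnion₂_subset fun j hj y hy => ?_
      have h1 : dist y (p j) < δ / 2 := Metric.mem_ball.mp hy
      have h2 := hhigh j hj
      have h3 := dist_triangle y (p j) c
      exact Metric.mem_closedBall.mpr (by linarith)
  have key : volume (Metric.ball c R₁) + ∑ j ∈ s, volume (Metric.ball (p j) (δ / 2))
      ≤ volume (Metric.closedBall c R₂) := by
    rw [hsum, ← measure_union hdisj0
      (MeasurableSet.biUnion s.countable_toSet fun j _ => measurableSet_ball)]
    exact measure_mono hsub
  rw [hball c R₁ hR₁, hcball,
    Finset.sum_congr rfl (fun j _ => hball (p j) (δ / 2) (by positivity)),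
    Finset.sum_const, nsmul_eq_mul] at key
  have key2 : (ENNReal.ofReal (R₁ ^ 3) + (s.card : ENNReal) * ENNReal.ofReal ((δ / 2) ^ 3)) * v
      ≤ ENNReal.ofReal (R₂ ^ 3) * v := by
    calc (ENNReal.ofReal (R₁ ^ 3) + (s.card : ENNReal) * ENNReal.ofReal ((δ / 2) ^ 3)) * v
        = ENNReal.ofReal (R₁ ^ 3) * v + (s.card : ENNReal) * (ENNReal.ofReal ((δ / 2) ^ 3) * v) := by
          ring
      _ ≤ ENNReal.ofReal (R₂ ^ 3) * v := key
  have key3 : ENNReal.ofReal (R₁ ^ 3) + (s.card : ENNReal) * ENNReal.ofReal ((δ / 2) ^ 3)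
      ≤ ENNReal.ofReal (R₂ ^ 3) := (ENNReal.mul_le_mul_iff_left hv0 hvt).mp key2
  have key4 : ENNReal.ofReal (R₁ ^ 3 + (s.card : ℝ) * (δ / 2) ^ 3) ≤ ENNReal.ofReal (R₂ ^ 3) := by
    rw [ENNReal.ofReal_add (by positivity) (by positivity),
      ENNReal.ofReal_mul (by positivity), ENNReal.ofReal_natCast]
    exact key3
  exact (ENNReal.ofReal_le_ofReal_iff (by positivity)).mp key4

private lemma rowBound
    (x : (N : ℕ) → Fin N → EuclideanSpace ℝ (Fin 3))
    (ℓ : ℝ) (hℓ : 0 < ℓ)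
    (hB : ∀ N : ℕ, ∀ i j : Fin N, i ≠ j →
      ℓ * (N : ℝ) ^ (-(1 : ℝ) / 3) ≤ ‖x N i - x N j‖)
    (lam : ℝ) (hlam : 0 < lam) (N : ℕ) (hN : 1 ≤ N) (i : Fin N) :
    ∑ j ∈ Finset.univ.erase i,
        Real.exp (-(lam * ‖x N i - x N j‖)) / (4 * π * ‖x N i - x N j‖)
      ≤ 124 / (π * lam ^ 2 * ℓ ^ 3) * N := by
  classical
  have hπ := Real.pi_pos
  have hNpos : (0 : ℝ) < N := by exact_mod_cast hN
  set δ := ℓ * (N : ℝ) ^ (-(1 : ℝ) / 3) with hδdef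
  have hδ : 0 < δ := by positivity
  have hδ3 : δ ^ 3 = ℓ ^ 3 / N := by
    have h1 : ((N : ℝ) ^ (-(1 : ℝ) / 3)) ^ (3 : ℕ) = (N : ℝ)⁻¹ := by
      rw [← Real.rpow_natCast ((N : ℝ) ^ (-(1 : ℝ) / 3)) 3,
        ← Real.rpow_mul (Nat.cast_nonneg N)]
      norm_num [Real.rpow_neg_one]
    rw [hδdef, mul_pow, h1, div_eq_mul_inv]
  clear_value δ
  set r : Fin N → ℝ := fun j => ‖x N i - x N j‖ with hrdef
  have hrδ : ∀ j ∈ Finset.univ.erase i, δ ≤ r j := by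
    intro j hj
    rw [hδdef]
    exact hB N i j (Ne.symm (Finset.mem_erase.mp hj).1)
  set k : Fin N → ℕ := fun j => ⌊r j / δ⌋₊ with hkdef
  have hk1 : ∀ j ∈ Finset.univ.erase i, 1 ≤ k j := by
    intro j hj
    apply Nat.le_floor
    rw [Nat.cast_one, le_div_iff₀ hδ, one_mul]
    exact hrδ j hj
  have hkl : ∀ j, (k j : ℝ) * δ ≤ r j := by
    intro j
    have h := Nat.floor_le (show 0 ≤ r j / δ by positivity)
    calc (k j : ℝ) * δ ≤ r j / δ * δ := by
          exact mul_le_mul_of_nonneg_right h hδ.le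
      _ = r j := by field_simp
  have hku : ∀ j, r j < ((k j : ℝ) + 1) * δ := by
    intro j
    have h := Nat.lt_floor_add_one (r j / δ)
    calc r j = r j / δ * δ := by field_simp
      _ < ((k j : ℝ) + 1) * δ := by
          exact mul_lt_mul_of_pos_right h hδ
  set s' := lam * δ with hs'def
  have hs' : 0 < s' := mul_pos hlam hδ
  set H : ℕ → ℝ := fun m => Real.exp (-(lam * (m * δ))) / (4 * π * (m * δ)) with hHdef
  have hHnonneg : ∀ m : ℕ, 0 ≤ H m := fun m =>
    div_nonneg (Real.exp_nonneg _) (by positivity)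
  -- step 1 : pointwise bound
  have step1 : ∀ j ∈ Finset.univ.erase i,
      Real.exp (-(lam * ‖x N i - x N j‖)) / (4 * π * ‖x N i - x N j‖) ≤ H (k j) := by
    intro j hj
    have h1 : 1 ≤ k j := hk1 j hj
    have h1' : (1 : ℝ) ≤ k j := by exact_mod_cast h1
    have h2 : (k j : ℝ) * δ ≤ r j := hkl j
    have hkδpos : 0 < (k j : ℝ) * δ := by nlinarith
    refine div_le_div₀ (Real.exp_nonneg _) ?_ (by nlinarith) (by nlinarith)
    exact Real.exp_le_exp.mpr (by nlinarith)
  -- packing / fiber count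
  set K := (Finset.univ.erase i).image k with hKdef
  have hKone : ∀ m ∈ K, 1 ≤ m := by
    intro m hm
    obtain ⟨j, hj, rfl⟩ := Finset.mem_image.mp hm
    exact hk1 j hj
  have card_le : ∀ m ∈ K,
      ((((Finset.univ.erase i).filter (fun j => k j = m)).card : ℝ)) ≤ 124 * (m : ℝ) ^ 2 := by
    intro m hm
    have hm1 : 1 ≤ m := hKone m hm
    have hm1' : (1 : ℝ) ≤ m := by exact_mod_cast hm1
    set S := (Finset.univ.erase i).filter (fun j => k j = m) with hSdef
    have pack := packingAux S (x N) (x N i) δ (((m : ℝ) - 1/2) * δ) (((m : ℝ) + 3/2) * δ)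
      hδ (by nlinarith) (by nlinarith)
      (fun j hj j' hj' hjj' => by
        rw [hδdef, dist_eq_norm]
        exact hB N j j' hjj')
      (fun j hj => by
        have hjm : k j = m := (Finset.mem_filter.mp hj).2
        have h2 : (m : ℝ) * δ ≤ r j := by rw [← hjm]; exact hkl j
        have hd : dist (x N j) (x N i) = r j := by
          rw [dist_eq_norm, hrdef]
          exact norm_sub_rev _ _
        rw [hd]; nlinarith)
      (fun j hj => by
        have hjm : k j = m := (Finset.mem_filter.mp hj).2
        have h2 : r j < ((m : ℝ) + 1) * δ := by rw [← hjm]; exact hku j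
        have hd : dist (x N j) (x N i) = r j := by
          rw [dist_eq_norm, hrdef]
          exact norm_sub_rev _ _
        rw [hd]; nlinarith)
    nlinarith [pow_pos hδ 3, sq_nonneg ((m : ℝ) - 1), sq_nonneg ((m : ℝ) + 1)]
  -- per m bound : m * exp (-(s' * m)) ≤ (2/s') * exp (-(s'/2) * m)
  have key_m : ∀ m : ℕ, 1 ≤ m →
      (m : ℝ) * Real.exp (-(s' * m)) ≤ 2 / s' * Real.exp (-(s' / 2) * m) := by
    intro m hm1
    have hm1' : (1 : ℝ) ≤ m := by exact_mod_cast hm1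
    have hEpos : 0 < Real.exp (s' / 2 * m) := Real.exp_pos _
    have hAe : Real.exp (-(s' / 2) * m) = (Real.exp (s' / 2 * m))⁻¹ := by
      rw [← Real.exp_neg]; congr 1; ring
    have hEge : s' / 2 * m ≤ Real.exp (s' / 2 * m) := by
      nlinarith [Real.add_one_le_exp (s' / 2 * m)]
    have hmA : (m : ℝ) * Real.exp (-(s' / 2) * m) ≤ 2 / s' := by
      rw [hAe, mul_inv_le_iff₀ hEpos]
      calc (m : ℝ) = 2 / s' * (s' / 2 * m) := by field_simp
        _ ≤ 2 / s' * Real.exp (s' / 2 * m) :=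
            mul_le_mul_of_nonneg_left hEge (by positivity)
    have hsplit : Real.exp (-(s' * m)) = Real.exp (-(s' / 2) * m) * Real.exp (-(s' / 2) * m) := by
      rw [← Real.exp_add]; congr 1; ring
    calc (m : ℝ) * Real.exp (-(s' * m))
        = (m : ℝ) * Real.exp (-(s' / 2) * m) * Real.exp (-(s' / 2) * m) := by
          rw [hsplit]; ring
      _ ≤ 2 / s' * Real.exp (-(s' / 2) * m) :=
          mul_le_mul_of_nonneg_right hmA (Real.exp_nonneg _)
  set C := 124 / (4 * π * δ) * (2 / s') with hCdef
  have hC : 0 ≤ C := by positivity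
  have per_m : ∀ m ∈ K,
      (((Finset.univ.erase i).filter (fun j => k j = m)).card) • H m
        ≤ C * Real.exp (-(s' / 2) * m) := by
    intro m hm
    have hm1 : 1 ≤ m := hKone m hm
    have hm1' : (1 : ℝ) ≤ m := by exact_mod_cast hm1
    have hmne : (m : ℝ) ≠ 0 := by positivity
    rw [nsmul_eq_mul]
    calc (((Finset.univ.erase i).filter (fun j => k j = m)).card : ℝ) * H m
        ≤ 124 * (m : ℝ) ^ 2 * H m :=
          mul_le_mul_of_nonneg_right (card_le m hm) (hHnonneg m)
      _ = 124 / (4 * π * δ) * ((m : ℝ) * Real.exp (-(s' * m))) := by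
          simp only [hHdef]
          have : lam * ((m : ℝ) * δ) = s' * m := by rw [hs'def]; ring
          rw [this]
          field_simp
      _ ≤ 124 / (4 * π * δ) * (2 / s' * Real.exp (-(s' / 2) * m)) :=
          mul_le_mul_of_nonneg_left (key_m m hm1) (by positivity)
      _ = C * Real.exp (-(s' / 2) * m) := by rw [hCdef]; ring
  clear_value s' C
  calc ∑ j ∈ Finset.univ.erase i,
        Real.exp (-(lam * ‖x N i - x N j‖)) / (4 * π * ‖x N i - x N j‖)
      ≤ ∑ j ∈ Finset.univ.erase i, H (k j) := Finset.sum_le_sum step1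
    _ = ∑ m ∈ K, (((Finset.univ.erase i).filter (fun j => k j = m)).card) • H m := by
        rw [hKdef]; exact Finset.sum_comp H k
    _ ≤ ∑ m ∈ K, C * Real.exp (-(s' / 2) * m) := Finset.sum_le_sum per_m
    _ = C * ∑ m ∈ K, Real.exp (-(s' / 2) * m) := by rw [Finset.mul_sum]
    _ ≤ C * (2 / s') := mul_le_mul_of_nonneg_left (expSum s' hs' K hKone) hC
    _ = 124 / (π * lam ^ 2 * δ ^ 3) := by
        rw [hCdef, hs'def, div_mul_div_comm, div_mul_div_comm,
          div_eq_div_iff (by positivity) (by positivity)]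
        ring
    _ = 124 / (π * lam ^ 2 * ℓ ^ 3) * N := by
        rw [hδ3, div_mul_eq_mul_div, div_eq_div_iff (by positivity) (by positivity)]
        field_simp

/-- (d = 3, free Laplacian). Under Assumptions (A) and (B), with
`a` bounded continuous and `a ≥ a₀ > 0`, the interaction matrix `Ξ_N^λ` with entries
`[Ξ]_{jj} = N·a(x_j) + (λ−λ₀)/(4π)` and `[Ξ]_{ij} = −e^{−λ|x_i−x_j|}/(4π|x_i−x_j|)` (i ≠ j)
satisfies `(1/N)·Ξ_N^λ ≥ γ_λ·Id` for all `λ` large and `N ≥ N_λ`. -/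
theorem stmt_9
    (lam₀ : ℝ) (hlam₀ : 0 < lam₀)
    (U : EuclideanSpace ℝ (Fin 3) → ℝ)
    (hU_nonneg : ∀ y, 0 ≤ U y)
    (hU_bdd : ∃ M : ℝ, ∀ y, U y ≤ M)
    (hU_supp : HasCompactSupport U)
    (hU_int : ∫ y, U y = 1)
    (x : (N : ℕ) → Fin N → EuclideanSpace ℝ (Fin 3))
    (hx_supp : ∀ N (j : Fin N), x N j ∈ tsupport U)
    (hA : ∀ f : EuclideanSpace ℝ (Fin 3) → ℂ, Continuous f → (∃ M, ∀ y, ‖f y‖ ≤ M) →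
      Tendsto (fun N : ℕ => (N : ℂ)⁻¹ * ∑ j : Fin N, f (x N j)) atTop
        (𝓝 (∫ y, f y * (U y : ℂ))))
    (ℓ : ℝ) (hℓ : 0 < ℓ)
    (hB : ∀ N : ℕ, ∀ i j : Fin N, i ≠ j →
      ℓ * (N : ℝ) ^ (-(1 : ℝ) / 3) ≤ ‖x N i - x N j‖)
    (a : EuclideanSpace ℝ (Fin 3) → ℝ)
    (ha_cont : Continuous a) (ha_bdd : ∃ M : ℝ, ∀ y, a y ≤ M)
    (a₀ : ℝ) (ha₀ : 0 < a₀) (ha_lb : ∀ y, a₀ ≤ a y)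
    (Ξ : (lam : ℝ) → (N : ℕ) → Fin N → Fin N → ℝ)
    (hΞ : ∀ (lam : ℝ) (N : ℕ) (i j : Fin N), Ξ lam N i j =
      if i = j then (N : ℝ) * a (x N j) + (lam - lam₀) / (4 * π)
      else -(Real.exp (-(lam * ‖x N i - x N j‖)) / (4 * π * ‖x N i - x N j‖))) :
    ∃ lamStar : ℝ, 0 < lamStar ∧ ∀ lam : ℝ, lamStar ≤ lam →
      ∃ γ : ℝ, 0 < γ ∧ ∃ Nlam : ℕ, ∀ N : ℕ, Nlam ≤ N → ∀ q : Fin N → ℂ,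
        γ * (N : ℝ) * ∑ j : Fin N, ‖q j‖ ^ 2 ≤
          (∑ i : Fin N, ∑ j : Fin N,
            (starRingEnd ℂ) (q i) * ((Ξ lam N i j : ℝ) : ℂ) * q j).re := by
  classical
  have hπ := Real.pi_pos
  refine ⟨max lam₀ (Real.sqrt (248 / (π * a₀ * ℓ ^ 3))),
    lt_of_lt_of_le hlam₀ (le_max_left _ _), ?_⟩
  intro lam hlam
  have hlam0 : lam₀ ≤ lam := le_trans (le_max_left _ _) hlam
  have hlampos : 0 < lam := lt_of_lt_of_le hlam₀ hlam0
  have hsq : 248 / (π * a₀ * ℓ ^ 3) ≤ lam ^ 2 := by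
    have h1 : Real.sqrt (248 / (π * a₀ * ℓ ^ 3)) ≤ lam := le_trans (le_max_right _ _) hlam
    have h2 := Real.sq_sqrt (show (0:ℝ) ≤ 248 / (π * a₀ * ℓ ^ 3) by positivity)
    nlinarith [Real.sqrt_nonneg (248 / (π * a₀ * ℓ ^ 3))]
  have hrow_const : 124 / (π * lam ^ 2 * ℓ ^ 3) ≤ a₀ / 2 := by
    rw [div_le_div_iff₀ (by positivity) (by norm_num)]
    rw [div_le_iff₀ (by positivity)] at hsq
    nlinarith
  refine ⟨a₀ / 2, by positivity, 1, ?_⟩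
  intro N hN q
  set u : Fin N → ℝ := fun j => ‖q j‖ with hudef
  set R : Fin N → Fin N → ℝ := fun i j => ((starRingEnd ℂ) (q i) * q j).re with hRdef
  set g : Fin N → Fin N → ℝ := fun i j => if i = j then 0
    else Real.exp (-(lam * ‖x N i - x N j‖)) / (4 * π * ‖x N i - x N j‖) with hgdef
  set d : Fin N → ℝ := fun j => (N : ℝ) * a (x N j) + (lam - lam₀) / (4 * π) with hddef
  have hg_nonneg : ∀ i j, 0 ≤ g i j := by
    intro i j
    rw [hgdef]
    dsimp only
    split
    · exact le_rfl
    · positivity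
  have hg_symm : ∀ i j, g i j = g j i := by
    intro i j
    rw [hgdef]
    dsimp only
    rcases eq_or_ne i j with h | h
    · rw [if_pos h, if_pos h.symm]
    · rw [if_neg h, if_neg h.symm, norm_sub_rev]
  have hg_row : ∀ i, ∑ j, g i j ≤ a₀ / 2 * N := by
    intro i
    have h0 : ∑ j, g i j = ∑ j ∈ Finset.univ.erase i, g i j := by
      rw [← Finset.add_sum_erase _ _ (Finset.mem_univ i)]
      rw [hgdef]
      simp
    have h1 : ∑ j ∈ Finset.univ.erase i, g i j
        = ∑ j ∈ Finset.univ.erase i,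
            Real.exp (-(lam * ‖x N i - x N j‖)) / (4 * π * ‖x N i - x N j‖) := by
      refine Finset.sum_congr rfl fun j hj => ?_
      rw [hgdef]
      dsimp only
      rw [if_neg (Ne.symm (Finset.mem_erase.mp hj).1)]
    rw [h0, h1]
    calc ∑ j ∈ Finset.univ.erase i,
          Real.exp (-(lam * ‖x N i - x N j‖)) / (4 * π * ‖x N i - x N j‖)
        ≤ 124 / (π * lam ^ 2 * ℓ ^ 3) * N := rowBound x ℓ hℓ hB lam hlampos N hN i
      _ ≤ a₀ / 2 * N := by
          apply mul_le_mul_of_nonneg_right hrow_const (Nat.cast_nonneg N)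
  have hXi : ∀ i j, Ξ lam N i j = (if i = j then d j else 0) - g i j := by
    intro i j
    rw [hΞ, hgdef, hddef]
    dsimp only
    rcases eq_or_ne i j with h | h
    · rw [if_pos h, if_pos h, if_pos h, sub_zero]
    · rw [if_neg h, if_neg h, if_neg h, zero_sub]
  have hRii : ∀ i, R i i = u i ^ 2 := by
    intro i
    rw [hRdef, hudef]
    dsimp only
    rw [mul_comm, Complex.mul_conj, Complex.normSq_eq_norm_sq, Complex.ofReal_re]
  have hRle : ∀ i j, R i j ≤ u i * u j := by
    intro i j
    rw [hRdef, hudef]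
    dsimp only
    calc ((starRingEnd ℂ) (q i) * q j).re ≤ ‖(starRingEnd ℂ) (q i) * q j‖ :=
          Complex.re_le_norm _
      _ = ‖(starRingEnd ℂ) (q i) * q j‖ := rfl
      _ = ‖q i‖ * ‖q j‖ := by rw [norm_mul, RCLike.norm_conj]
  have stepA : (∑ i : Fin N, ∑ j : Fin N,
      (starRingEnd ℂ) (q i) * ((Ξ lam N i j : ℝ) : ℂ) * q j).re
      = ∑ i : Fin N, ∑ j : Fin N, Ξ lam N i j * R i j := by
    rw [Complex.re_sum]
    refine Finset.sum_congr rfl fun i _ => ?_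
    rw [Complex.re_sum]
    refine Finset.sum_congr rfl fun j _ => ?_
    rw [show (starRingEnd ℂ) (q i) * ((Ξ lam N i j : ℝ) : ℂ) * q j
        = ((Ξ lam N i j : ℝ) : ℂ) * ((starRingEnd ℂ) (q i) * q j) from by ring,
      Complex.re_ofReal_mul]
  rw [stepA]
  have hdecomp : ∑ i : Fin N, ∑ j : Fin N, Ξ lam N i j * R i j
      = (∑ i : Fin N, d i * u i ^ 2) - ∑ i : Fin N, ∑ j : Fin N, g i j * R i j := by
    have e1 : ∀ i j : Fin N, Ξ lam N i j * R i j
        = (if i = j then d j * R i j else 0) - g i j * R i j := by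
      intro i j
      rw [hXi i j, sub_mul, ite_mul, zero_mul]
    simp_rw [e1, Finset.sum_sub_distrib]
    congr 1
    refine Finset.sum_congr rfl fun i _ => ?_
    rw [Finset.sum_ite_eq, if_pos (Finset.mem_univ i), hRii]
  rw [hdecomp]
  -- bound the off-diagonal part
  have hswap : ∑ i : Fin N, ∑ j : Fin N, g i j * u j ^ 2
      = ∑ i : Fin N, ∑ j : Fin N, g i j * u i ^ 2 := by
    rw [Finset.sum_comm]
    exact Finset.sum_congr rfl fun i _ => Finset.sum_congr rfl fun j _ => by rw [hg_symm]
  have hT1 : ∑ i : Fin N, ∑ j : Fin N, g i j * R i j * 2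
      ≤ ∑ i : Fin N, ∑ j : Fin N, (g i j * u i ^ 2 + g i j * u j ^ 2) := by
    refine Finset.sum_le_sum fun i _ => Finset.sum_le_sum fun j _ => ?_
    have h1 := hRle i j
    have h2 := hg_nonneg i j
    nlinarith [sq_nonneg (u i - u j)]
  have hT2 : ∑ i : Fin N, ∑ j : Fin N, (g i j * u i ^ 2 + g i j * u j ^ 2)
      = 2 * ∑ i : Fin N, ∑ j : Fin N, g i j * u i ^ 2 := by
    simp_rw [Finset.sum_add_distrib]
    rw [hswap]
    ring
  have hT3 : ∑ i : Fin N, ∑ j : Fin N, g i j * u i ^ 2 ≤ a₀ / 2 * N * ∑ j : Fin N, u j ^ 2 := by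
    calc ∑ i : Fin N, ∑ j : Fin N, g i j * u i ^ 2
        = ∑ i : Fin N, (∑ j : Fin N, g i j) * u i ^ 2 := by
          exact Finset.sum_congr rfl fun i _ => (Finset.sum_mul _ _ _).symm
      _ ≤ ∑ i : Fin N, (a₀ / 2 * N) * u i ^ 2 :=
          Finset.sum_le_sum fun i _ =>
            mul_le_mul_of_nonneg_right (hg_row i) (sq_nonneg _)
      _ = a₀ / 2 * N * ∑ j : Fin N, u j ^ 2 := by rw [← Finset.mul_sum]
  have hTg : ∑ i : Fin N, ∑ j : Fin N, g i j * R i j ≤ a₀ / 2 * N * ∑ j : Fin N, u j ^ 2 := by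
    have := hT1
    rw [hT2] at this
    have h4 : ∑ i : Fin N, ∑ j : Fin N, g i j * R i j * 2
        = (∑ i : Fin N, ∑ j : Fin N, g i j * R i j) * 2 := by
      simp_rw [← Finset.sum_mul]
    rw [h4] at this
    linarith
  have hD : (N : ℝ) * a₀ * ∑ j : Fin N, u j ^ 2 ≤ ∑ i : Fin N, d i * u i ^ 2 := by
    rw [Finset.mul_sum]
    refine Finset.sum_le_sum fun i _ => ?_
    have h1 : (N : ℝ) * a₀ ≤ d i := by
      rw [hddef]
      dsimp only
      have h2 : a₀ ≤ a (x N i) := ha_lb _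
      have h3 : 0 ≤ (lam - lam₀) / (4 * π) := by
        apply div_nonneg (by linarith) (by positivity)
      have h4 : (0:ℝ) ≤ N := Nat.cast_nonneg N
      nlinarith
    exact mul_le_mul_of_nonneg_right h1 (sq_nonneg _)
  have hsum_eq : ∑ j : Fin N, ‖q j‖ ^ 2 = ∑ j : Fin N, u j ^ 2 := rfl
  rw [hsum_eq]
  have hN1 : (1:ℝ) ≤ N := by exact_mod_cast hN
  linarith
end
end

section
/- Let d = 3 and set ζ₀(x) = 1/(4π|x|). Under Assumptions (A), (B), (C), let ξ : ℝ³ × ℝ³ → ℂ be bounded and Lipschitz continuous. Set r_N = (ℓ/2)·N^{−1/3}, B_{N,j} = B(x_{N,j}, r_N), and define Θ_N := (1/N²)·Σ_{1≤i,j≤N, i≠j} ( conj(p_{N,i})·p_{N,j} / (|B_{N,i}|·|B_{N,j}|) )·∫_{B_{N,i}×B_{N,j}} ζ₀(x − y)·( ξ(x_{N,i}, x_{N,j}) − ξ(x,y) ) dx dy, where |B_{N,j}| = (4/3)·π·r_N³. Then there exist a constant C > 0 and N₀ ∈ ℕ such that |Θ_N| ≤ C·N^{−1/3} for all N ≥ N₀.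 -/
open MeasureTheory Filter Finset Real Topology
open Metric

noncomputable section

local notation "E3" => EuclideanSpace ℝ (Fin 3)

lemma vol3_ball (x₀ : E3) {ρ : ℝ} (hρ : 0 ≤ ρ) :
    volume (Metric.ball x₀ ρ) = ENNReal.ofReal (ρ ^ 3) * volume (Metric.ball (0:E3) 1) := by
  rw [MeasureTheory.Measure.addHaar_ball volume x₀ hρ, finrank_euclideanSpace_fin]

lemma lint_ball_inv {ρ : ℝ} (hρ : 0 < ρ) :
    ∫⁻ z in Metric.ball (0:E3) ρ, ENNReal.ofReal ‖z‖⁻¹ ≤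
      ENNReal.ofReal (3 * ρ ^ 2) * volume (Metric.ball (0:E3) 1) := by
  set v := volume (Metric.ball (0:E3) 1)
  set A : ℕ → Set E3 := fun k => Metric.ball 0 (ρ / 2 ^ k) \ Metric.ball 0 (ρ / 2 ^ (k+1)) with hA
  have hcover : Metric.ball (0:E3) ρ \ {0} ⊆ ⋃ k, A k := by
    rintro z ⟨hz, hz0⟩
    rw [Metric.mem_ball, dist_zero_right] at hz
    have hzpos : 0 < ‖z‖ := norm_pos_iff.mpr (by simpa using hz0)
    have hex : ∃ n : ℕ, ρ / 2 ^ (n+1) ≤ ‖z‖ := by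
      obtain ⟨n, hn⟩ := exists_pow_lt_of_lt_one (div_pos hzpos hρ) (by norm_num : (1:ℝ)/2 < 1)
      refine ⟨n, le_of_lt ?_⟩
      have : ρ * ((1/2)^(n+1)) < ρ * (‖z‖/ρ) := by
        refine mul_lt_mul_of_pos_left (lt_of_le_of_lt ?_ hn) hρ
        exact pow_le_pow_of_le_one (by norm_num) (by norm_num) (Nat.le_succ n)
      rw [mul_div_cancel₀ _ hρ.ne'] at this
      calc ρ / 2 ^ (n+1) = ρ * ((1/2)^(n+1)) := by rw [div_pow, one_pow]; ring
        _ < ‖z‖ := this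
    classical
    set k := Nat.find hex with hk
    refine Set.mem_iUnion.mpr ⟨k, ?_, ?_⟩
    · rw [Metric.mem_ball, dist_zero_right]
      rcases Nat.eq_zero_or_pos k with h0 | hpos
      · rw [h0]; simpa using hz
      · have := Nat.find_min hex (m := k - 1) (by omega)
        push_neg at this
        have hk1 : k - 1 + 1 = k := by omega
        rwa [hk1] at this
    · intro hmem
      rw [Metric.mem_ball, dist_zero_right] at hmem
      exact absurd (Nat.find_spec hex) (not_le.mpr hmem)
  have hshell : ∀ k : ℕ, ∫⁻ z in A k, ENNReal.ofReal ‖z‖⁻¹ ≤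
      ENNReal.ofReal (2 * ρ ^ 2 * (4⁻¹:ℝ) ^ k) * v := by
    intro k
    have hmeasA : MeasurableSet (A k) := measurableSet_ball.diff measurableSet_ball
    have hstep : ∫⁻ z in A k, ENNReal.ofReal ‖z‖⁻¹ ≤
        ∫⁻ _ in A k, ENNReal.ofReal (2 ^ (k+1) / ρ) := by
      refine setLIntegral_mono measurable_const fun z hz => ?_
      refine ENNReal.ofReal_le_ofReal ?_
      have hlow : ρ / 2 ^ (k+1) ≤ ‖z‖ := by
        have := hz.2
        rw [Metric.mem_ball, dist_zero_right, not_lt] at this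
        exact this
      have hpos : (0:ℝ) < ρ / 2 ^ (k+1) := by positivity
      calc ‖z‖⁻¹ ≤ (ρ / 2 ^ (k+1))⁻¹ := by gcongr
        _ = 2 ^ (k+1) / ρ := by rw [inv_div]
    rw [setLIntegral_const] at hstep
    refine le_trans hstep ?_
    have hvol : volume (A k) ≤ ENNReal.ofReal ((ρ / 2 ^ k) ^ 3) * v := by
      rw [← vol3_ball (0:E3) (by positivity : (0:ℝ) ≤ ρ / 2 ^ k)]
      exact measure_mono Set.diff_subset
    calc ENNReal.ofReal (2 ^ (k+1) / ρ) * volume (A k)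
        ≤ ENNReal.ofReal (2 ^ (k+1) / ρ) * (ENNReal.ofReal ((ρ / 2 ^ k) ^ 3) * v) := by
          exact mul_le_mul_right hvol _
      _ = ENNReal.ofReal (2 ^ (k+1) / ρ * (ρ / 2 ^ k) ^ 3) * v := by
          rw [ENNReal.ofReal_mul (by positivity), mul_assoc]
      _ = ENNReal.ofReal (2 * ρ ^ 2 * (4⁻¹:ℝ) ^ k) * v := by
          congr 1
          field_simp
          ring_nf
          congr 1
          have h4 : (2:ℝ)⁻¹ ^ (k * 3) * 2 ^ k = (1/4)^k := by
            rw [mul_comm k 3, pow_mul, ← mul_pow]; norm_num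
          rw [mul_assoc (ρ^2), h4]
  have hsum : Summable (fun k : ℕ => 2 * ρ ^ 2 * (4⁻¹:ℝ) ^ k) :=
    (summable_geometric_of_lt_one (by norm_num) (by norm_num)).mul_left _
  have hae : (Metric.ball (0:E3) ρ \ {0} : Set E3) =ᵐ[volume] Metric.ball (0:E3) ρ := by
    refine MeasureTheory.diff_ae_eq_self.mpr ?_
    exact measure_mono_null Set.inter_subset_right (measure_singleton _)
  calc ∫⁻ z in Metric.ball (0:E3) ρ, ENNReal.ofReal ‖z‖⁻¹
      = ∫⁻ z in Metric.ball (0:E3) ρ \ {0}, ENNReal.ofReal ‖z‖⁻¹ := (setLIntegral_congr hae).symm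
    _ ≤ ∫⁻ z in ⋃ k, A k, ENNReal.ofReal ‖z‖⁻¹ := lintegral_mono_set hcover
    _ ≤ ∑' k, ∫⁻ z in A k, ENNReal.ofReal ‖z‖⁻¹ := lintegral_iUnion_le _ _
    _ ≤ ∑' k, ENNReal.ofReal (2 * ρ ^ 2 * (4⁻¹:ℝ) ^ k) * v := ENNReal.tsum_le_tsum hshell
    _ = (∑' k, ENNReal.ofReal (2 * ρ ^ 2 * (4⁻¹:ℝ) ^ k)) * v := ENNReal.tsum_mul_right
    _ = ENNReal.ofReal (∑' k, 2 * ρ ^ 2 * (4⁻¹:ℝ) ^ k) * v := by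
        rw [ENNReal.ofReal_tsum_of_nonneg (fun k => by positivity) hsum]
    _ ≤ ENNReal.ofReal (3 * ρ ^ 2) * v := by
        gcongr
        rw [tsum_mul_left, tsum_geometric_of_lt_one (by norm_num) (by norm_num)]
        nlinarith [sq_nonneg ρ]

lemma lint_ball_inv' (x₀ : E3) {ρ : ℝ} (hρ : 0 < ρ) :
    ∫⁻ z in Metric.ball x₀ ρ, ENNReal.ofReal ‖z - x₀‖⁻¹ ≤
      ENNReal.ofReal (3 * ρ ^ 2) * volume (Metric.ball (0:E3) 1) := by
  have h : ∫⁻ z in Metric.ball x₀ ρ, ENNReal.ofReal ‖z - x₀‖⁻¹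
      = ∫⁻ z in Metric.ball (0:E3) ρ, ENNReal.ofReal ‖z‖⁻¹ := by
    rw [← lintegral_indicator measurableSet_ball, ← lintegral_indicator measurableSet_ball,
      ← lintegral_sub_right_eq_self
        (fun z => (Metric.ball (0:E3) ρ).indicator (fun u => ENNReal.ofReal ‖u‖⁻¹) z) x₀]
    congr 1; funext z
    by_cases hz : z ∈ Metric.ball x₀ ρ
    · rw [Set.indicator_of_mem hz, Set.indicator_of_mem
        (by rw [mem_ball_zero_iff]; exact mem_ball_iff_norm.mp hz)]
    · rw [Set.indicator_of_notMem hz, Set.indicator_of_notMem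
        (by rw [mem_ball_zero_iff]; exact fun h => hz (mem_ball_iff_norm.mpr h))]
  rw [h]; exact lint_ball_inv hρ

lemma pair_int_bound {xi xj : E3} {r : ℝ} (hr : 0 < r) (hd : 2 * r ≤ ‖xi - xj‖)
    (φ : E3 × E3 → ℂ) (hφc : Continuous φ) (b : ℝ) (hb : 0 ≤ b)
    (hφ : ∀ z ∈ (Metric.ball xi r) ×ˢ (Metric.ball xj r), ‖φ z‖ ≤ b) :
    ‖∫ z in (Metric.ball xi r) ×ˢ (Metric.ball xj r),
        ((1 / (4 * π * ‖z.1 - z.2‖) : ℝ) : ℂ) * φ z‖ ≤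
      (4*π)⁻¹ * b * (432 * r ^ 6 / ‖xi - xj‖) * ((volume (Metric.ball (0:E3) 1)).toReal)^2 := by
  set v := volume (Metric.ball (0:E3) 1) with hv
  set d := ‖xi - xj‖ with hdd
  set s := Metric.ball xi r with hs
  set t := Metric.ball xj r with ht
  have hd0 : 0 < d := lt_of_lt_of_le (by positivity) hd
  have hst : MeasurableSet (s ×ˢ t) := measurableSet_ball.prod measurableSet_ball
  have hvne : v ≠ ⊤ := measure_ball_lt_top.ne
  have hmeasg : Measurable fun z : E3 × E3 => ENNReal.ofReal ‖z.1 - z.2‖⁻¹ :=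
    ((measurable_fst.sub measurable_snd).norm.inv).ennreal_ofReal
  have hFm : AEStronglyMeasurable
      (fun z : E3 × E3 => ((1 / (4 * π * ‖z.1 - z.2‖) : ℝ) : ℂ) * φ z)
      (volume.restrict (s ×ˢ t)) := by
    refine (Measurable.mul ?_ hφc.measurable).aestronglyMeasurable
    exact Complex.measurable_ofReal.comp
      (measurable_const.div (measurable_const.mul (measurable_fst.sub measurable_snd).norm))
  have hWle : (∫⁻ z in s ×ˢ t, ENNReal.ofReal ‖z.1 - z.2‖⁻¹) ≤
      ENNReal.ofReal (432 * r ^ 6 / d) * (v * v) := by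
    rcases lt_or_ge d (4*r) with hnear | hfar
    · -- near case via Tonelli
      have hsplit : (∫⁻ z in s ×ˢ t, ENNReal.ofReal ‖z.1 - z.2‖⁻¹) =
          ∫⁻ x in s, ∫⁻ y in t, ENNReal.ofReal ‖x - y‖⁻¹ := by
        calc (∫⁻ z in s ×ˢ t, ENNReal.ofReal ‖z.1 - z.2‖⁻¹)
            = ∫⁻ z, ENNReal.ofReal ‖z.1 - z.2‖⁻¹
                ∂((volume.restrict s).prod (volume.restrict t)) := by
              rw [Measure.prod_restrict, ← Measure.volume_eq_prod]
          _ = ∫⁻ x in s, ∫⁻ y in t, ENNReal.ofReal ‖x - y‖⁻¹ :=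
              MeasureTheory.lintegral_prod _ hmeasg.aemeasurable
      have hinner : ∀ x ∈ s, (∫⁻ y in t, ENNReal.ofReal ‖x - y‖⁻¹) ≤
          ENNReal.ofReal (108 * r^2) * v := by
        intro x hx
        have hx' : ‖x - xi‖ < r := mem_ball_iff_norm.mp hx
        have hxsub : t ⊆ Metric.ball x (d + 2*r) := by
          intro y hy
          have h1 : ‖y - xj‖ < r := mem_ball_iff_norm.mp hy
          refine mem_ball_iff_norm.mpr ?_
          have hyx : y - x = (y - xj) + (xj - xi) + (xi - x) := by abel
          have h2 : ‖xj - xi‖ = d := by rw [hdd, norm_sub_rev]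
          have h3 : ‖xi - x‖ < r := by rw [norm_sub_rev]; exact hx'
          calc ‖y - x‖ ≤ ‖y - xj‖ + ‖xj - xi‖ + ‖xi - x‖ := by
                rw [hyx]; exact le_trans (norm_add_le _ _) (by gcongr; exact norm_add_le _ _)
            _ < r + d + r := by rw [h2]; gcongr
            _ = d + 2*r := by ring
        calc (∫⁻ y in t, ENNReal.ofReal ‖x - y‖⁻¹)
            = ∫⁻ y in t, ENNReal.ofReal ‖y - x‖⁻¹ := by
              apply lintegral_congr; intro y; rw [norm_sub_rev]
          _ ≤ ∫⁻ y in Metric.ball x (d + 2*r), ENNReal.ofReal ‖y - x‖⁻¹ :=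
              lintegral_mono_set hxsub
          _ ≤ ENNReal.ofReal (3 * (d + 2*r)^2) * v := lint_ball_inv' x (by positivity)
          _ ≤ ENNReal.ofReal (108 * r^2) * v := by
              exact mul_le_mul_left (ENNReal.ofReal_le_ofReal (by nlinarith)) v
      calc (∫⁻ z in s ×ˢ t, ENNReal.ofReal ‖z.1 - z.2‖⁻¹)
          = ∫⁻ x in s, ∫⁻ y in t, ENNReal.ofReal ‖x - y‖⁻¹ := hsplit
        _ ≤ ∫⁻ _ in s, ENNReal.ofReal (108 * r^2) * v := setLIntegral_mono measurable_const hinner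
        _ = ENNReal.ofReal (108 * r^2) * v * volume s := setLIntegral_const _ _
        _ = ENNReal.ofReal (108 * r^2) * v * (ENNReal.ofReal (r^3) * v) := by
            rw [hs, vol3_ball xi hr.le, hv]
        _ = (ENNReal.ofReal (108 * r^2) * ENNReal.ofReal (r^3)) * (v * v) := by ring
        _ ≤ ENNReal.ofReal (432 * r ^ 6 / d) * (v * v) := by
            refine mul_le_mul_left ?_ _
            rw [← ENNReal.ofReal_mul (by positivity)]
            refine ENNReal.ofReal_le_ofReal ?_
            rw [le_div_iff₀ hd0]
            nlinarith [pow_nonneg hr.le 5, pow_pos hr 5]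
    · -- far case
      have hpt : ∀ z ∈ s ×ˢ t, ENNReal.ofReal ‖z.1 - z.2‖⁻¹ ≤ ENNReal.ofReal (2/d) := by
        rintro z ⟨hz1, hz2⟩
        refine ENNReal.ofReal_le_ofReal ?_
        have h1 : ‖xi - z.1‖ < r := by
          rw [norm_sub_rev]; exact mem_ball_iff_norm.mp hz1
        have h2 : ‖z.2 - xj‖ < r := mem_ball_iff_norm.mp hz2
        have hlow : d - 2*r ≤ ‖z.1 - z.2‖ := by
          have heq : xi - xj = (xi - z.1) + (z.1 - z.2) + (z.2 - xj) := by abel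
          have hle : d ≤ ‖xi - z.1‖ + ‖z.1 - z.2‖ + ‖z.2 - xj‖ := by
            rw [hdd, heq]
            exact le_trans (norm_add_le _ _) (by gcongr; exact norm_add_le _ _)
          linarith
        have hlow2 : d/2 ≤ ‖z.1 - z.2‖ := by linarith
        calc ‖z.1 - z.2‖⁻¹ ≤ (d/2)⁻¹ := by gcongr
          _ = 2/d := by rw [inv_div]
      calc (∫⁻ z in s ×ˢ t, ENNReal.ofReal ‖z.1 - z.2‖⁻¹)
          ≤ ∫⁻ _ in s ×ˢ t, ENNReal.ofReal (2/d) := setLIntegral_mono measurable_const hpt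
        _ = ENNReal.ofReal (2/d) * volume (s ×ˢ t) := setLIntegral_const _ _
        _ = (ENNReal.ofReal (2/d) * ENNReal.ofReal (r^3) * ENNReal.ofReal (r^3)) * (v * v) := by
            rw [show volume (s ×ˢ t) = volume s * volume t from by
              rw [MeasureTheory.Measure.volume_eq_prod, Measure.prod_prod]]
            rw [hs, ht, vol3_ball xi hr.le, vol3_ball xj hr.le, hv]
            ring
        _ ≤ ENNReal.ofReal (432 * r ^ 6 / d) * (v * v) := by
            refine mul_le_mul_left ?_ _
            rw [← ENNReal.ofReal_mul (by positivity), ← ENNReal.ofReal_mul (by positivity)]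
            refine ENNReal.ofReal_le_ofReal ?_
            rw [div_mul_eq_mul_div, div_mul_eq_mul_div]
            gcongr ?_ / d
            nlinarith [pow_nonneg hr.le 6]
  -- pointwise bound on the integrand
  have hptF : ∀ z ∈ s ×ˢ t, ENNReal.ofReal ‖((1 / (4 * π * ‖z.1 - z.2‖) : ℝ) : ℂ) * φ z‖ ≤
      ENNReal.ofReal ((4*π)⁻¹ * b) * ENNReal.ofReal ‖z.1 - z.2‖⁻¹ := by
    intro z hz
    rw [← ENNReal.ofReal_mul (by positivity)]
    refine ENNReal.ofReal_le_ofReal ?_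
    rw [norm_mul]
    have h1 : ‖((1 / (4 * π * ‖z.1 - z.2‖) : ℝ) : ℂ)‖ = (4*π)⁻¹ * ‖z.1 - z.2‖⁻¹ := by
      rw [Complex.norm_real, Real.norm_eq_abs, abs_of_nonneg (by positivity), one_div, mul_inv]
    rw [h1]
    calc (4*π)⁻¹ * ‖z.1 - z.2‖⁻¹ * ‖φ z‖ ≤ (4*π)⁻¹ * ‖z.1 - z.2‖⁻¹ * b := by
          exact mul_le_mul_of_nonneg_left (hφ z hz) (by positivity)
      _ = (4*π)⁻¹ * b * ‖z.1 - z.2‖⁻¹ := by ring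
  have hX : (∫⁻ z in s ×ˢ t, ENNReal.ofReal ‖((1 / (4 * π * ‖z.1 - z.2‖) : ℝ) : ℂ) * φ z‖) ≤
      ENNReal.ofReal ((4*π)⁻¹ * b) * (ENNReal.ofReal (432 * r ^ 6 / d) * (v * v)) := by
    calc (∫⁻ z in s ×ˢ t, ENNReal.ofReal ‖((1 / (4 * π * ‖z.1 - z.2‖) : ℝ) : ℂ) * φ z‖)
        ≤ ∫⁻ z in s ×ˢ t, ENNReal.ofReal ((4*π)⁻¹ * b) * ENNReal.ofReal ‖z.1 - z.2‖⁻¹ :=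
          setLIntegral_mono (measurable_const.mul hmeasg) hptF
      _ = ENNReal.ofReal ((4*π)⁻¹ * b) * ∫⁻ z in s ×ˢ t, ENNReal.ofReal ‖z.1 - z.2‖⁻¹ :=
          lintegral_const_mul' _ _ ENNReal.ofReal_ne_top
      _ ≤ ENNReal.ofReal ((4*π)⁻¹ * b) * (ENNReal.ofReal (432 * r ^ 6 / d) * (v * v)) :=
          mul_le_mul_right hWle _
  have hfin : ENNReal.ofReal ((4*π)⁻¹ * b) * (ENNReal.ofReal (432 * r ^ 6 / d) * (v * v)) ≠ ⊤ :=
    ENNReal.mul_ne_top ENNReal.ofReal_ne_top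
      (ENNReal.mul_ne_top ENNReal.ofReal_ne_top (ENNReal.mul_ne_top hvne hvne))
  calc ‖∫ z in s ×ˢ t, ((1 / (4 * π * ‖z.1 - z.2‖) : ℝ) : ℂ) * φ z‖
      ≤ ∫ z in s ×ˢ t, ‖((1 / (4 * π * ‖z.1 - z.2‖) : ℝ) : ℂ) * φ z‖ :=
        norm_integral_le_integral_norm _
    _ = (∫⁻ z in s ×ˢ t, ENNReal.ofReal ‖((1 / (4 * π * ‖z.1 - z.2‖) : ℝ) : ℂ) * φ z‖).toReal :=
        integral_eq_lintegral_of_nonneg_ae (Filter.Eventually.of_forall fun _ => norm_nonneg _)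
          hFm.norm
    _ ≤ (ENNReal.ofReal ((4*π)⁻¹ * b) *
          (ENNReal.ofReal (432 * r ^ 6 / d) * (v * v))).toReal := ENNReal.toReal_mono hfin hX
    _ = (4*π)⁻¹ * b * (432 * r ^ 6 / d) * ((volume (Metric.ball (0:E3) 1)).toReal)^2 := by
        rw [ENNReal.toReal_mul, ENNReal.toReal_mul, ENNReal.toReal_mul,
          ENNReal.toReal_ofReal (by positivity), ENNReal.toReal_ofReal (by positivity)]
        rw [← hv]; ring

lemma count_bound {n : ℕ} (x : Fin n → E3) (r R₁ : ℝ) (hr : 0 < r) (hR : 0 < R₁)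
    (hsep : ∀ i j : Fin n, i ≠ j → 2*r ≤ ‖x i - x j‖)
    (hloc : ∀ i j : Fin n, ‖x i - x j‖ + r ≤ R₁) (i : Fin n) :
    ∑ j ∈ Finset.univ.erase i, ‖x i - x j‖⁻¹ ≤ (9/2) * R₁^2 / r^3 := by
  classical
  set v := volume (Metric.ball (0:E3) 1) with hv
  have hvne : v ≠ ⊤ := measure_ball_lt_top.ne
  have hv0 : v ≠ 0 := (measure_ball_pos _ _ one_pos).ne'
  set S := Finset.univ.erase i with hS
  have hmb : Measurable fun z : E3 => ENNReal.ofReal ((3/2) * ‖z - x i‖⁻¹) :=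
    (((measurable_id.sub_const (x i)).norm.inv).const_mul _).ennreal_ofReal
  have key : ∀ j ∈ S, ENNReal.ofReal (‖x i - x j‖⁻¹) * volume (Metric.ball (x j) r) ≤
      ∫⁻ z in Metric.ball (x j) r, ENNReal.ofReal ((3/2) * ‖z - x i‖⁻¹) := by
    intro j hj
    have hij : i ≠ j := (Finset.ne_of_mem_erase hj).symm
    have hd : 2*r ≤ ‖x i - x j‖ := hsep i j hij
    have hd0 : 0 < ‖x i - x j‖ := lt_of_lt_of_le (by positivity) hd
    have hpt : ∀ z ∈ Metric.ball (x j) r,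
        ENNReal.ofReal (‖x i - x j‖⁻¹) ≤ ENNReal.ofReal ((3/2) * ‖z - x i‖⁻¹) := by
      intro z hz
      refine ENNReal.ofReal_le_ofReal ?_
      have h1 : ‖z - x j‖ < r := mem_ball_iff_norm.mp hz
      have h2 : ‖z - x i‖ ≤ (3/2) * ‖x i - x j‖ := by
        have heq : z - x i = (z - x j) + (x j - x i) := by abel
        have h3 : ‖x j - x i‖ = ‖x i - x j‖ := norm_sub_rev _ _
        calc ‖z - x i‖ ≤ ‖z - x j‖ + ‖x j - x i‖ := by rw [heq]; exact norm_add_le _ _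
          _ ≤ r + ‖x i - x j‖ := by rw [h3]; gcongr
          _ ≤ (3/2) * ‖x i - x j‖ := by linarith
      have h6 : ‖x i - z‖ = ‖z - x i‖ := norm_sub_rev _ _
      have h5 : r ≤ ‖z - x i‖ := by
        have heq : x i - x j = (x i - z) + (z - x j) := by abel
        have h7 : ‖x i - x j‖ ≤ ‖x i - z‖ + ‖z - x j‖ := by rw [heq]; exact norm_add_le _ _
        have h8 : ‖z - x j‖ ≤ r := h1.le
        linarith [h6 ▸ h7]
      have h4 : 0 < ‖z - x i‖ := lt_of_lt_of_le hr h5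
      have h9 : (2/3) * ‖z - x i‖ ≤ ‖x i - x j‖ := by linarith
      calc ‖x i - x j‖⁻¹ ≤ ((2/3) * ‖z - x i‖)⁻¹ := by gcongr
        _ = (3/2) * ‖z - x i‖⁻¹ := by rw [mul_inv]; norm_num
    calc ENNReal.ofReal (‖x i - x j‖⁻¹) * volume (Metric.ball (x j) r)
        = ∫⁻ _ in Metric.ball (x j) r, ENNReal.ofReal (‖x i - x j‖⁻¹) :=
          (setLIntegral_const _ _).symm
      _ ≤ ∫⁻ z in Metric.ball (x j) r, ENNReal.ofReal ((3/2) * ‖z - x i‖⁻¹) :=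
          setLIntegral_mono hmb hpt
  have hdisj : Set.PairwiseDisjoint (S : Set (Fin n)) (fun j => Metric.ball (x j) r) := by
    intro a _ b _ hab
    refine Metric.ball_disjoint_ball ?_
    rw [dist_eq_norm]
    calc r + r = 2 * r := by ring
      _ ≤ ‖x a - x b‖ := hsep a b hab
  have hsub : (⋃ j ∈ S, Metric.ball (x j) r) ⊆ Metric.ball (x i) R₁ := by
    intro z hz
    obtain ⟨j, hj, hzj⟩ := Set.mem_iUnion₂.mp hz
    refine mem_ball_iff_norm.mpr ?_
    have h1 : ‖z - x j‖ < r := mem_ball_iff_norm.mp hzj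
    have heq : z - x i = (z - x j) + (x j - x i) := by abel
    have h2 : ‖x j - x i‖ = ‖x i - x j‖ := norm_sub_rev _ _
    calc ‖z - x i‖ ≤ ‖z - x j‖ + ‖x j - x i‖ := by rw [heq]; exact norm_add_le _ _
      _ < r + ‖x i - x j‖ := by rw [h2]; gcongr
      _ = ‖x i - x j‖ + r := by ring
      _ ≤ R₁ := hloc i j
  have main : ENNReal.ofReal ((∑ j ∈ S, ‖x i - x j‖⁻¹) * r^3) * v ≤
      ENNReal.ofReal ((9/2) * R₁^2) * v := by
    have e1 : ENNReal.ofReal ((∑ j ∈ S, ‖x i - x j‖⁻¹) * r^3) * v =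
        ∑ j ∈ S, ENNReal.ofReal (‖x i - x j‖⁻¹) * volume (Metric.ball (x j) r) := by
      have : ∀ j ∈ S, ENNReal.ofReal (‖x i - x j‖⁻¹) * volume (Metric.ball (x j) r) =
          ENNReal.ofReal (‖x i - x j‖⁻¹) * (ENNReal.ofReal (r^3) * v) := by
        intro j _; rw [vol3_ball (x j) hr.le, hv]
      rw [Finset.sum_congr rfl this, ← Finset.sum_mul,
        ENNReal.ofReal_mul (Finset.sum_nonneg fun j _ => by positivity),
        ENNReal.ofReal_sum_of_nonneg (fun j _ => by positivity), mul_assoc]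
    rw [e1]
    calc ∑ j ∈ S, ENNReal.ofReal (‖x i - x j‖⁻¹) * volume (Metric.ball (x j) r)
        ≤ ∑ j ∈ S, ∫⁻ z in Metric.ball (x j) r, ENNReal.ofReal ((3/2) * ‖z - x i‖⁻¹) :=
          Finset.sum_le_sum key
      _ = ∫⁻ z in ⋃ j ∈ S, Metric.ball (x j) r, ENNReal.ofReal ((3/2) * ‖z - x i‖⁻¹) :=
          (lintegral_biUnion_finset hdisj (fun _ _ => measurableSet_ball) _).symm
      _ ≤ ∫⁻ z in Metric.ball (x i) R₁, ENNReal.ofReal ((3/2) * ‖z - x i‖⁻¹) :=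
          lintegral_mono_set hsub
      _ = ENNReal.ofReal (3/2) * ∫⁻ z in Metric.ball (x i) R₁, ENNReal.ofReal (‖z - x i‖⁻¹) := by
          rw [← lintegral_const_mul' _ _ ENNReal.ofReal_ne_top]
          apply lintegral_congr
          intro z
          rw [← ENNReal.ofReal_mul (by positivity)]
      _ ≤ ENNReal.ofReal (3/2) * (ENNReal.ofReal (3 * R₁^2) * v) :=
          mul_le_mul_right (lint_ball_inv' (x i) hR) _
      _ = ENNReal.ofReal ((9/2) * R₁^2) * v := by
          rw [← mul_assoc, ← ENNReal.ofReal_mul (by positivity)]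
          congr 2
          ring
  have main2 : (∑ j ∈ S, ‖x i - x j‖⁻¹) * r^3 ≤ (9/2) * R₁^2 := by
    have := (ENNReal.mul_le_mul_iff_left hv0 hvne).mp main
    exact (ENNReal.ofReal_le_ofReal_iff (by positivity)).mp this
  rw [le_div_iff₀ (by positivity : (0:ℝ) < r^3)]
  exact main2

lemma sum_if_erase {n : ℕ} (i : Fin n) (a : Fin n → ℝ) :
    ∑ j : Fin n, (if i = j then 0 else a j) = ∑ j ∈ Finset.univ.erase i, a j := by
  classical
  rw [← Finset.sum_erase (s := Finset.univ) (f := fun j => if i = j then 0 else a j)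
    (h := (if_pos rfl : (if i = i then (0:ℝ) else a i) = 0))]
  exact Finset.sum_congr rfl fun j hj => if_neg (Finset.ne_of_mem_erase hj).symm

lemma sum_erase_comm {n : ℕ} (f : Fin n → Fin n → ℝ) :
    ∑ i, ∑ j ∈ Finset.univ.erase i, f i j = ∑ j, ∑ i ∈ Finset.univ.erase j, f i j := by
  classical
  have h1 : ∀ g : Fin n → Fin n → ℝ, ∀ i : Fin n,
      ∑ j ∈ Finset.univ.erase i, g i j = ∑ j : Fin n, (if i = j then 0 else g i j) := by
    intro g i
    rw [sum_if_erase]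
  calc ∑ i, ∑ j ∈ Finset.univ.erase i, f i j
      = ∑ i, ∑ j : Fin n, (if i = j then 0 else f i j) := by
        exact Finset.sum_congr rfl fun i _ => h1 f i
    _ = ∑ j : Fin n, ∑ i : Fin n, (if i = j then 0 else f i j) := Finset.sum_comm
    _ = ∑ j, ∑ i ∈ Finset.univ.erase j, f i j := by
        refine Finset.sum_congr rfl fun j _ => ?_
        rw [← Finset.sum_erase (s := Finset.univ)
          (f := fun i => if i = j then 0 else f i j)
          (h := (if_pos rfl : (if j = j then (0:ℝ) else f j j) = 0))]
        exact Finset.sum_congr rfl fun i hi => if_neg (Finset.ne_of_mem_erase hi)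

set_option maxHeartbeats 1000000 in
/-- (d = 3, ζ₀(x) = 1/(4π|x|)). Under Assumptions (A), (B), (C), for `ξ`
bounded Lipschitz, the remainder
`Θ_N = (1/N²)·Σ_{i≠j} (conj(p_i)p_j/(|B_i||B_j|))·∫_{B_i×B_j} ζ₀(x−y)(ξ(x_i,x_j)−ξ(x,y))`
satisfies `|Θ_N| ≤ C·N^{−1/3}` for all large `N`. -/
theorem stmt_12
    (U : EuclideanSpace ℝ (Fin 3) → ℝ)
    (hU_nonneg : ∀ y, 0 ≤ U y)
    (hU_bdd : ∃ M : ℝ, ∀ y, U y ≤ M)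
    (hU_supp : HasCompactSupport U)
    (hU_int : ∫ y, U y = 1)
    (x : (N : ℕ) → Fin N → EuclideanSpace ℝ (Fin 3))
    (hx_supp : ∀ N (j : Fin N), x N j ∈ tsupport U)
    (hA : ∀ f : EuclideanSpace ℝ (Fin 3) → ℂ, Continuous f → (∃ M, ∀ y, ‖f y‖ ≤ M) →
      Tendsto (fun N : ℕ => (N : ℂ)⁻¹ * ∑ j : Fin N, f (x N j)) atTop
        (𝓝 (∫ y, f y * (U y : ℂ))))
    (ℓ : ℝ) (hℓ : 0 < ℓ)
    (hB : ∀ N : ℕ, ∀ i j : Fin N, i ≠ j →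
      ℓ * (N : ℝ) ^ (-(1 : ℝ) / 3) ≤ ‖x N i - x N j‖)
    (p : (N : ℕ) → Fin N → ℂ)
    (c : ℝ) (hc : 0 < c)
    (hC : ∀ N : ℕ, (N : ℝ)⁻¹ * ∑ j : Fin N, ‖p N j‖ ^ 2 ≤ c)
    (ξ : EuclideanSpace ℝ (Fin 3) × EuclideanSpace ℝ (Fin 3) → ℂ)
    (hξ_bdd : ∃ M : ℝ, ∀ z, ‖ξ z‖ ≤ M)
    (K : NNReal) (hξ_lip : LipschitzWith K ξ)
    (rN : ℕ → ℝ) (hrN : ∀ N : ℕ, rN N = (ℓ / 2) * (N : ℝ) ^ (-(1 : ℝ) / 3))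
    (Θ : ℕ → ℂ)
    (hΘ : ∀ N : ℕ, Θ N = ((N : ℂ) ^ 2)⁻¹ * ∑ i : Fin N, ∑ j : Fin N,
      if i = j then 0 else
        ((starRingEnd ℂ) (p N i) * p N j /
            ((((4 / 3) * π * rN N ^ 3 : ℝ) : ℂ) * (((4 / 3) * π * rN N ^ 3 : ℝ) : ℂ))) *
          ∫ z in (Metric.ball (x N i) (rN N)) ×ˢ (Metric.ball (x N j) (rN N)),
            ((1 / (4 * π * ‖z.1 - z.2‖) : ℝ) : ℂ) * (ξ (x N i, x N j) - ξ z)) :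
    ∃ C : ℝ, 0 < C ∧ ∃ N₀ : ℕ, ∀ N : ℕ, N₀ ≤ N →
      ‖Θ N‖ ≤ C * (N : ℝ) ^ (-(1 : ℝ) / 3) := by
    classical
  obtain ⟨R₀, hR₀⟩ := hU_supp.isBounded.subset_closedBall 0
  set R : ℝ := max R₀ 0 with hR
  have hRnn : 0 ≤ R := le_max_right _ _
  have hRsupp : tsupport U ⊆ Metric.closedBall 0 R :=
    hR₀.trans (Metric.closedBall_subset_closedBall (le_max_left _ _))
  set R₁ : ℝ := 2*R + ℓ with hR₁
  have hR₁0 : 0 < R₁ := by positivity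
  set vt := (volume (Metric.ball (0:E3) 1)).toReal with hvt
  have hvt0 : 0 < vt :=
    ENNReal.toReal_pos (measure_ball_pos _ _ one_pos).ne' measure_ball_lt_top.ne
  have hπ : (0:ℝ) < π := Real.pi_pos
  set Ac : ℝ := (3/(4*π))^2 * ((4*π)⁻¹ * (K:ℝ) * 432 * vt^2) with hAc
  have hAc0 : 0 ≤ Ac := by positivity
  set C₃ : ℝ := (9/2) * R₁^2 * (2/ℓ)^3 with hC₃
  have hC₃0 : 0 < C₃ := by positivity
  refine ⟨Ac * c * C₃ * (ℓ/2) + 1, by positivity, 1, ?_⟩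
  intro N hN
  have hN0 : (0:ℝ) < N := by exact_mod_cast Nat.lt_of_lt_of_le Nat.zero_lt_one hN
  have hN1 : (1:ℝ) ≤ N := by exact_mod_cast hN
  set nR := (N : ℝ) ^ (-(1:ℝ)/3) with hnR
  have hnR0 : 0 < nR := Real.rpow_pos_of_pos hN0 _
  have hnR1 : nR ≤ 1 := Real.rpow_le_one_of_one_le_of_nonpos hN1 (by norm_num)
  set r := rN N with hrdef
  have hr : r = (ℓ/2) * nR := hrN N
  have hr0 : 0 < r := by rw [hr]; positivity
  have hr3 : r^3 = (ℓ/2)^3 / N := by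
    have h1 : nR^3 = (N:ℝ)⁻¹ := by
      rw [hnR, ← Real.rpow_natCast ((N:ℝ) ^ (-(1:ℝ)/3)) 3, ← Real.rpow_mul hN0.le]
      norm_num
      exact Real.rpow_neg_one N
    rw [hr, mul_pow, h1]
    ring
  set b₀ : ℝ := (4/3) * π * r^3 with hb₀
  have hb₀0 : 0 < b₀ := by positivity
  set d : Fin N → Fin N → ℝ := fun i j => ‖x N i - x N j‖ with hd
  have hd2r : ∀ i j : Fin N, i ≠ j → 2*r ≤ d i j := by
    intro i j hij
    have := hB N i j hij
    rw [hd, hr]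
    calc 2*((ℓ/2)*nR) = ℓ * nR := by ring
      _ ≤ ‖x N i - x N j‖ := this
  have hd0 : ∀ i j : Fin N, i ≠ j → 0 < d i j := fun i j hij =>
    lt_of_lt_of_le (by positivity) (hd2r i j hij)
  have hloc : ∀ i j : Fin N, ‖x N i - x N j‖ + r ≤ R₁ := by
    intro i j
    have h1 : ‖x N i‖ ≤ R := by
      have := hRsupp (hx_supp N i); rwa [Metric.mem_closedBall, dist_zero_right] at this
    have h2 : ‖x N j‖ ≤ R := by
      have := hRsupp (hx_supp N j); rwa [Metric.mem_closedBall, dist_zero_right] at this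
    have h3 : ‖x N i - x N j‖ ≤ R + R := le_trans (norm_sub_le _ _) (by gcongr)
    have h4 : r ≤ ℓ := by
      rw [hr]
      calc (ℓ/2) * nR ≤ (ℓ/2) * 1 := by gcongr
        _ ≤ ℓ := by linarith
    rw [hR₁]; linarith
  -- counting bound
  have hcount : ∀ i : Fin N, ∑ j ∈ Finset.univ.erase i, (d i j)⁻¹ ≤ C₃ * N := by
    intro i
    have h := count_bound (x N) r R₁ hr0 hR₁0
      (fun i j hij => hd2r i j hij) hloc i
    have heq : (9/2) * R₁^2 / r^3 = C₃ * N := by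
      rw [hr3, hC₃]
      field_simp
    rw [heq] at h
    exact h
  -- per-pair term bound
  have hterm : ∀ i j : Fin N, i ≠ j →
      ‖((starRingEnd ℂ) (p N i) * p N j / ((b₀ : ℂ) * (b₀ : ℂ))) *
        ∫ z in (Metric.ball (x N i) r) ×ˢ (Metric.ball (x N j) r),
          ((1 / (4 * π * ‖z.1 - z.2‖) : ℝ) : ℂ) * (ξ (x N i, x N j) - ξ z)‖ ≤
      ‖p N i‖ * ‖p N j‖ * (Ac * (r / d i j)) := by
    intro i j hij
    have hdij := hd0 i j hij
    have hφb : ∀ z ∈ (Metric.ball (x N i) r) ×ˢ (Metric.ball (x N j) r),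
        ‖ξ (x N i, x N j) - ξ z‖ ≤ (K:ℝ) * r := by
      rintro z ⟨hz1, hz2⟩
      have h1 : dist (ξ (x N i, x N j)) (ξ z) ≤ (K:ℝ) * dist (x N i, x N j) z :=
        hξ_lip.dist_le_mul _ _
      rw [dist_eq_norm] at h1
      refine le_trans h1 ?_
      have h2 : dist (x N i, x N j) z ≤ r := by
        rw [Prod.dist_eq]
        have ha : dist (x N i) z.1 ≤ r := by
          rw [dist_comm]; exact (Metric.mem_ball.mp hz1).le
        have hb' : dist (x N j) z.2 ≤ r := by
          rw [dist_comm]; exact (Metric.mem_ball.mp hz2).le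
        exact max_le ha hb'
      exact mul_le_mul_of_nonneg_left h2 (K.coe_nonneg)
    have hpair := pair_int_bound (xi := x N i) (xj := x N j) hr0 (hd2r i j hij)
      (fun z => ξ (x N i, x N j) - ξ z) (continuous_const.sub hξ_lip.continuous)
      ((K:ℝ) * r) (by positivity) hφb
    rw [norm_mul, norm_div, norm_mul, RCLike.norm_conj, norm_mul]
    have hbnorm : ‖((b₀:ℝ):ℂ)‖ = b₀ := by
      rw [Complex.norm_real, Real.norm_eq_abs, abs_of_pos hb₀0]
    rw [hbnorm]
    calc ‖p N i‖ * ‖p N j‖ / (b₀ * b₀) * ‖∫ z in _, _‖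
        ≤ ‖p N i‖ * ‖p N j‖ / (b₀ * b₀) *
          ((4*π)⁻¹ * ((K:ℝ) * r) * (432 * r ^ 6 / d i j) * vt^2) := by
          gcongr
      _ = ‖p N i‖ * ‖p N j‖ * (Ac * (r / d i j)) := by
          rw [hAc, hb₀]
          field_simp
  -- assembly
  have hP : (∑ j : Fin N, ‖p N j‖ ^ 2) ≤ c * N := by
    have h := hC N
    rw [inv_mul_le_iff₀ hN0] at h
    calc (∑ j : Fin N, ‖p N j‖ ^ 2) ≤ (N:ℝ) * c := h
      _ = c * N := by ring
  set a : Fin N → Fin N → ℝ := fun i j => ‖p N i‖ * ‖p N j‖ * (Ac * (r / d i j)) with ha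
  have hstep : ∀ i : Fin N, ∀ j ∈ Finset.univ.erase i,
      a i j ≤ (Ac*r/2) * ((‖p N i‖^2 + ‖p N j‖^2) * (d i j)⁻¹) := by
    intro i j hj
    have hij : i ≠ j := (Finset.ne_of_mem_erase hj).symm
    have hdpos := hd0 i j hij
    have h2ab := two_mul_le_add_sq ‖p N i‖ ‖p N j‖
    have hAr2 : (0:ℝ) ≤ Ac*r/2 := div_nonneg (mul_nonneg hAc0 hr0.le) (by norm_num)
    have base : ‖p N i‖*‖p N j‖*(Ac*r) ≤ (Ac*r/2)*(‖p N i‖^2+‖p N j‖^2) := by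
      calc ‖p N i‖*‖p N j‖*(Ac*r) = (Ac*r/2)*(2*‖p N i‖*‖p N j‖) := by ring
        _ ≤ (Ac*r/2)*(‖p N i‖^2+‖p N j‖^2) := by
            refine mul_le_mul_of_nonneg_left ?_ hAr2
            calc 2*‖p N i‖*‖p N j‖ = 2*(‖p N i‖*‖p N j‖) := by ring
              _ ≤ ‖p N i‖^2+‖p N j‖^2 := by
                  have := h2ab; nlinarith [h2ab]
    calc a i j = (‖p N i‖*‖p N j‖*(Ac*r)) * (d i j)⁻¹ := by simp only [ha]; ring
      _ ≤ ((Ac*r/2)*(‖p N i‖^2+‖p N j‖^2)) * (d i j)⁻¹ :=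
        mul_le_mul_of_nonneg_right base (inv_nonneg.mpr hdpos.le)
      _ = (Ac*r/2) * ((‖p N i‖^2 + ‖p N j‖^2) * (d i j)⁻¹) := by ring
  have hS1 : (∑ i : Fin N, ∑ j ∈ Finset.univ.erase i, ‖p N i‖^2 * (d i j)⁻¹) ≤
      (c*N)*(C₃*N) := by
    calc (∑ i : Fin N, ∑ j ∈ Finset.univ.erase i, ‖p N i‖^2 * (d i j)⁻¹)
        = ∑ i : Fin N, ‖p N i‖^2 * (∑ j ∈ Finset.univ.erase i, (d i j)⁻¹) := by
          exact Finset.sum_congr rfl fun i _ => (Finset.mul_sum _ _ _).symm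
      _ ≤ ∑ i : Fin N, ‖p N i‖^2 * (C₃ * N) := by
          refine Finset.sum_le_sum fun i _ => ?_
          exact mul_le_mul_of_nonneg_left (hcount i) (sq_nonneg _)
      _ = (∑ i : Fin N, ‖p N i‖^2) * (C₃ * N) := (Finset.sum_mul _ _ _).symm
      _ ≤ (c*N)*(C₃*N) := by
          refine mul_le_mul_of_nonneg_right hP (by positivity)
  have hS2 : (∑ i : Fin N, ∑ j ∈ Finset.univ.erase i, ‖p N j‖^2 * (d i j)⁻¹) ≤
      (c*N)*(C₃*N) := by
    rw [sum_erase_comm (fun i j => ‖p N j‖^2 * (d i j)⁻¹)]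
    calc (∑ j : Fin N, ∑ i ∈ Finset.univ.erase j, ‖p N j‖^2 * (d i j)⁻¹)
        = ∑ j : Fin N, ‖p N j‖^2 * (∑ i ∈ Finset.univ.erase j, (d j i)⁻¹) := by
          refine Finset.sum_congr rfl fun j _ => ?_
          rw [Finset.mul_sum]
          refine Finset.sum_congr rfl fun i _ => ?_
          rw [show d i j = d j i from norm_sub_rev _ _]
      _ ≤ ∑ j : Fin N, ‖p N j‖^2 * (C₃ * N) := by
          refine Finset.sum_le_sum fun j _ => ?_
          exact mul_le_mul_of_nonneg_left (hcount j) (sq_nonneg _)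
      _ = (∑ j : Fin N, ‖p N j‖^2) * (C₃ * N) := (Finset.sum_mul _ _ _).symm
      _ ≤ (c*N)*(C₃*N) := mul_le_mul_of_nonneg_right hP (by positivity)
  rw [hΘ N, ← hrdef, ← hb₀]
  calc ‖((N:ℂ)^2)⁻¹ * ∑ i : Fin N, ∑ j : Fin N,
        (if i = j then 0 else
          ((starRingEnd ℂ) (p N i) * p N j / ((b₀:ℂ) * (b₀:ℂ))) *
          ∫ z in (Metric.ball (x N i) r) ×ˢ (Metric.ball (x N j) r),
            ((1 / (4 * π * ‖z.1 - z.2‖) : ℝ) : ℂ) * (ξ (x N i, x N j) - ξ z))‖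
      = ((N:ℝ)^2)⁻¹ * ‖∑ i : Fin N, ∑ j : Fin N,
        (if i = j then 0 else
          ((starRingEnd ℂ) (p N i) * p N j / ((b₀:ℂ) * (b₀:ℂ))) *
          ∫ z in (Metric.ball (x N i) r) ×ˢ (Metric.ball (x N j) r),
            ((1 / (4 * π * ‖z.1 - z.2‖) : ℝ) : ℂ) * (ξ (x N i, x N j) - ξ z))‖ := by
        rw [norm_mul, norm_inv, norm_pow, Complex.norm_natCast]
    _ ≤ ((N:ℝ)^2)⁻¹ * ∑ i : Fin N, ∑ j : Fin N, (if i = j then 0 else a i j) := by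
        refine mul_le_mul_of_nonneg_left ?_ (by positivity)
        refine (norm_sum_le _ _).trans (Finset.sum_le_sum fun i _ =>
          (norm_sum_le _ _).trans (Finset.sum_le_sum fun j _ => ?_))
        by_cases hij : i = j
        · simp [hij]
        · rw [if_neg hij, if_neg hij]
          exact hterm i j hij
    _ = ((N:ℝ)^2)⁻¹ * ∑ i : Fin N, ∑ j ∈ Finset.univ.erase i, a i j := by
        congr 1
        exact Finset.sum_congr rfl fun i _ => sum_if_erase i (a i)
    _ ≤ ((N:ℝ)^2)⁻¹ * ∑ i : Fin N, ∑ j ∈ Finset.univ.erase i,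
          (Ac*r/2) * ((‖p N i‖^2 + ‖p N j‖^2) * (d i j)⁻¹) := by
        refine mul_le_mul_of_nonneg_left ?_ (by positivity)
        exact Finset.sum_le_sum fun i _ => Finset.sum_le_sum (hstep i)
    _ = ((N:ℝ)^2)⁻¹ * ((Ac*r/2) *
          ((∑ i : Fin N, ∑ j ∈ Finset.univ.erase i, ‖p N i‖^2 * (d i j)⁻¹) +
           (∑ i : Fin N, ∑ j ∈ Finset.univ.erase i, ‖p N j‖^2 * (d i j)⁻¹))) := by
        congr 1
        rw [← Finset.sum_add_distrib]
        rw [Finset.mul_sum]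
        refine Finset.sum_congr rfl fun i _ => ?_
        rw [← Finset.sum_add_distrib, Finset.mul_sum]
        refine Finset.sum_congr rfl fun j _ => ?_
        ring
    _ ≤ ((N:ℝ)^2)⁻¹ * ((Ac*r/2) * ((c*N)*(C₃*N) + (c*N)*(C₃*N))) := by
        refine mul_le_mul_of_nonneg_left ?_ (by positivity)
        refine mul_le_mul_of_nonneg_left ?_
          (div_nonneg (mul_nonneg hAc0 hr0.le) (by norm_num))
        exact add_le_add hS1 hS2
    _ = (Ac*c*C₃*(ℓ/2)) * nR := by
        rw [hr]
        field_simp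
        ring
    _ ≤ (Ac*c*C₃*(ℓ/2) + 1) * nR := by
        refine mul_le_mul_of_nonneg_right ?_ hnR0.le
        linarith
end
end
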